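/- arXiv:1912.04310 — 3 statements merged into one kernel-verified Lean document; each statement's English description precedes it below -/
import Mathlib

section
/- For every r ∈ (0,∞) and ε ∈ (0,1] there exists a skeleton ψ such that the ReLU-realization R_ReLU(ψ) : ℝ → ℝ is 2r-Lipschitz, sup_{x∈[−r,r]} |R_ReLU(ψ)(x) − x²| ≤ ε, R_ReLU(ψ)(x) = r·|x| for all x ∈ ℝ \ [−r,r], and P(ψ) ≤ max{52, 80·log₂(r) + 40·log₂(ε^{−1}) − 28}. -/
open scoped BigOperators ENNReal

noncomputable section

/-- The rectified linear unit activation function. -/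
def ReLU (x : ℝ) : ℝ := max x 0

/-- Truncation of a real sequence to its first `n` entries. -/
def trunc (n : ℕ) (x : ℕ → ℝ) : ℕ → ℝ := fun j => if j < n then x j else 0

/-- Embedding of a Euclidean vector into the space of real sequences. -/
def emb (n : ℕ) (x : EuclideanSpace ℝ (Fin n)) : ℕ → ℝ :=
  fun j => if h : j < n then x ⟨j, h⟩ else 0

/-- A neural network skeleton of depth `Dm + 1`.  The layer dimensions are
`l 0, …, l (Dm + 1)`; the weight matrix of layer `k + 1` is `V k` (a matrix of
size `l (k+1) × l k`, stored as a doubly indexed sequence) and its bias is `b k`.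
Entries beyond the relevant ranges are irrelevant junk. -/
structure NN where
  Dm : ℕ
  l : ℕ → ℕ
  V : ℕ → ℕ → ℕ → ℝ
  b : ℕ → ℕ → ℝ

namespace NN

/-- Depth `D(φ)` of a skeleton. -/
def depth (φ : NN) : ℕ := φ.Dm + 1

/-- Number of parameters `P(φ) = ∑_{k=1}^{D} l_k (l_{k-1} + 1)`. -/
def P (φ : NN) : ℕ := ∑ k ∈ Finset.range φ.depth, φ.l (k + 1) * (φ.l k + 1)

/-- The affine map `A_{k+1}(x) = V_{k+1} x + b_{k+1}` of a skeleton. -/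
def aff (φ : NN) (k : ℕ) (x : ℕ → ℝ) : ℕ → ℝ :=
  fun i => (∑ j ∈ Finset.range (φ.l k), φ.V k i j * x j) + φ.b k i

/-- State after `k` layers, with the activation applied after each affine map. -/
def hidden (a : ℝ → ℝ) (φ : NN) : ℕ → (ℕ → ℝ) → ℕ → ℝ
  | 0 => fun x => x
  | k + 1 => fun x i => a (φ.aff k (φ.hidden a k x) i)

/-- The `a`-realization `R_a(φ) = A_D ∘ a ∘ A_{D-1} ∘ ⋯ ∘ a ∘ A_1`, acting on
sequences (only the first `l 0` input coordinates and the first `l D` output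
coordinates are meaningful). -/
def fullReal (a : ℝ → ℝ) (φ : NN) (x : ℕ → ℝ) : ℕ → ℝ :=
  φ.aff φ.Dm (φ.hidden a φ.Dm (trunc (φ.l 0) x))

/-- The `a`-realization as a map `ℝ^m → ℝ^n` (meaningful when `l 0 = m` and
`l D = n`). -/
def realAs (a : ℝ → ℝ) (φ : NN) (m n : ℕ) (x : EuclideanSpace ℝ (Fin m)) :
    EuclideanSpace ℝ (Fin n) :=
  WithLp.toLp 2 (fun i => φ.fullReal a (emb m x) i)

/-- The `a`-realization as a scalar-valued map `ℝ^m → ℝ`. -/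
def realScalar (a : ℝ → ℝ) (φ : NN) (m : ℕ) (x : EuclideanSpace ℝ (Fin m)) : ℝ :=
  φ.fullReal a (emb m x) 0

/-- The `a`-realization as a map `ℝ → ℝ`. -/
def real1 (a : ℝ → ℝ) (φ : NN) (x : ℝ) : ℝ :=
  φ.fullReal a (fun j => if j = 0 then x else 0) 0

/-- Concatenation `ψ ∘ φ` of two skeletons (meaningful when
`l_{D(φ)}(φ) = l_0(ψ)`). -/
def comp (ψ φ : NN) : NN where
  Dm := φ.Dm + ψ.Dm
  l := fun k => if k < φ.depth then φ.l k else ψ.l (k + 1 - φ.depth)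
  V := fun k =>
    if k < φ.Dm then φ.V k
    else if k = φ.Dm then fun i j => ∑ m ∈ Finset.range (ψ.l 0), ψ.V 0 i m * φ.V φ.Dm m j
    else ψ.V (k - φ.Dm)
  b := fun k =>
    if k < φ.Dm then φ.b k
    else if k = φ.Dm then
      fun i => (∑ m ∈ Finset.range (ψ.l 0), ψ.V 0 i m * φ.b φ.Dm m) + ψ.b 0 i
    else ψ.b (k - φ.Dm)

/-- Offset of the `q`-th block in layer `k` of a parallelization. -/
def poff (ν : ℕ → NN) (k q : ℕ) : ℕ := ∑ j ∈ Finset.range q, (ν j).l k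

/-- Parallelization `p(φ_1, …, φ_n)` of `n` skeletons (meaningful when they all
have the same depth): block-diagonal weight matrices and concatenated biases. -/
def parallel (n : ℕ) (ν : ℕ → NN) : NN where
  Dm := (ν 0).Dm
  l := fun k => ∑ j ∈ Finset.range n, (ν j).l k
  V := fun k i j =>
    ∑ q ∈ Finset.range n,
      if poff ν (k + 1) q ≤ i ∧ i < poff ν (k + 1) q + (ν q).l (k + 1) ∧
          poff ν k q ≤ j ∧ j < poff ν k q + (ν q).l k then
        (ν q).V k (i - poff ν (k + 1) q) (j - poff ν k q)
      else 0
  b := fun k i =>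
    ∑ q ∈ Finset.range n,
      if poff ν (k + 1) q ≤ i ∧ i < poff ν (k + 1) q + (ν q).l (k + 1) then
        (ν q).b k (i - poff ν (k + 1) q)
      else 0

/-- The activation `a` fulfills the `c`-identity requirement, witnessed by the
skeleton `I`: `I` has depth 2, input and output dimension 1, hidden dimension
at most `c`, and its `a`-realization is the identity on `ℝ`. -/
def IdReq (a : ℝ → ℝ) (c : ℝ) (I : NN) : Prop :=
  I.Dm = 1 ∧ I.l 0 = 1 ∧ I.l 2 = 1 ∧ (I.l 1 : ℝ) ≤ c ∧
    ∀ x : ℕ → ℝ, I.fullReal a x 0 = x 0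

/-- The `d`-fold parallelization `I_d` of an identity skeleton. -/
def Idn (I : NN) (d : ℕ) : NN := parallel d fun _ => I

/-- Concatenate `m` identity networks after `φ`. -/
def padAfter (I φ : NN) : ℕ → NN
  | 0 => φ
  | m + 1 => comp (Idn I ((padAfter I φ m).l (padAfter I φ m).depth)) (padAfter I φ m)

/-- Concatenate `m` identity networks in front of `φ`. -/
def padBefore (I φ : NN) : ℕ → NN
  | 0 => φ
  | m + 1 => comp (padBefore I φ m) (Idn I ((padBefore I φ m).l 0))

/-- Diagonal ("staggered") parallelization `p_I(φ_1, …, φ_n)` of arbitrary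
skeletons, obtained by padding each `φ_q` with identity networks so that all
have equal depth and then parallelizing. -/
def dpar (I : NN) (n : ℕ) (ν : ℕ → NN) : NN :=
  parallel n fun q =>
    padAfter I (padBefore I (ν q) (∑ j ∈ Finset.range q, (ν j).depth))
      (∑ j ∈ Finset.Ico (q + 1) n, (ν j).depth)

end NN


def hh (x : ℝ) : ℝ := 2 * max x 0 - 4 * max (x - 1/2) 0 + 2 * max (x - 1) 0

set_option maxHeartbeats 1000000 in
lemma hh_eq_min (x : ℝ) : hh x = 2 * min (max x 0) (max (1 - x) 0) := by
  unfold hh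
  rcases max_cases x 0 with ⟨e1, f1⟩ | ⟨e1, f1⟩ <;>
  rcases max_cases (x - 1/2) 0 with ⟨e2, f2⟩ | ⟨e2, f2⟩ <;>
  rcases max_cases (x - 1) 0 with ⟨e3, f3⟩ | ⟨e3, f3⟩ <;>
  rcases max_cases (1 - x) 0 with ⟨e4, f4⟩ | ⟨e4, f4⟩ <;>
  rw [min_def] <;> split_ifs with hm <;>
  simp only [e1, e2, e3, e4] at * <;> linarith

lemma hh_nonneg (x : ℝ) : 0 ≤ hh x := by
  rw [hh_eq_min]; positivity

lemma hh_le_one (x : ℝ) : hh x ≤ 1 := by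
  rw [hh_eq_min]
  rcases le_total x (1/2) with h | h
  · have h2 : max x 0 ≤ 1/2 := max_le (by linarith) (by norm_num)
    nlinarith [min_le_left (max x 0) (max (1-x) 0)]
  · have h2 : max (1 - x) 0 ≤ 1/2 := max_le (by linarith) (by norm_num)
    nlinarith [min_le_right (max x 0) (max (1-x) 0)]

lemma hh_lip (u v : ℝ) : |hh u - hh v| ≤ 2 * |u - v| := by
  rw [hh_eq_min, hh_eq_min, ← mul_sub, abs_mul, abs_two]
  have h1 := abs_min_sub_min_le_max (max u 0) (max (1-u) 0) (max v 0) (max (1-v) 0)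
  have h2 := abs_max_sub_max_le_abs u v 0
  have h3 := abs_max_sub_max_le_abs (1-u) (1-v) 0
  have h4 : |1 - u - (1 - v)| = |u - v| := by rw [abs_sub_comm]; ring_nf
  have h5 : max |max u 0 - max v 0| |max (1-u) 0 - max (1-v) 0| ≤ |u - v| :=
    max_le h2 (by rw [← h4]; exact h3)
  nlinarith [abs_nonneg (min (max u 0) (max (1-u) 0) - min (max v 0) (max (1-v) 0))]

lemma hh_zero_left {x : ℝ} (h : x ≤ 0) : hh x = 0 := by
  rw [hh_eq_min, max_eq_right h, min_comm, min_eq_right (le_max_right _ _), mul_zero]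

lemma hh_zero_right {x : ℝ} (h : 1 ≤ x) : hh x = 0 := by
  rw [hh_eq_min, max_eq_right (by linarith : 1 - x ≤ 0), min_eq_right (le_max_right _ _), mul_zero]

lemma hh_sq {x : ℝ} (h0 : 0 ≤ x) (h1 : x ≤ 1) : x - hh x / 2 + (hh x)^2 / 4 = x^2 := by
  rcases le_total x (1/2) with h | h
  · have e : hh x = 2 * x := by
      rw [hh_eq_min, max_eq_left h0, min_eq_left (le_max_of_le_left (by linarith))]
    rw [e]; ring
  · have e : hh x = 2 * (1 - x) := by
      rw [hh_eq_min, max_eq_left h0, max_eq_left (by linarith : (0:ℝ) ≤ 1 - x),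
        min_eq_right (by linarith : 1 - x ≤ x)]
    rw [e]; ring

def gg (m : ℕ) : ℝ → ℝ := hh^[m]

def SS : ℕ → ℝ → ℝ
  | 0, u => u
  | (m+1), u => SS m u - gg (m+1) u / 4 ^ (m+1)

lemma gg_succ' (m : ℕ) (u : ℝ) : gg (m+1) u = hh (gg m u) :=
  Function.iterate_succ_apply' hh m u

lemma gg_succ (m : ℕ) (u : ℝ) : gg (m+1) u = gg m (hh u) :=
  Function.iterate_succ_apply hh m u

lemma gg_zero (m : ℕ) : gg m 0 = 0 :=
  Function.iterate_fixed (hh_zero_left le_rfl) m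

lemma gg_nonneg (m : ℕ) {u : ℝ} (hu : 0 ≤ u) : 0 ≤ gg m u := by
  cases m with
  | zero => exact hu
  | succ n => rw [gg_succ']; exact hh_nonneg _

lemma gg_mem {m : ℕ} {u : ℝ} (h0 : 0 ≤ u) (h1 : u ≤ 1) : 0 ≤ gg m u ∧ gg m u ≤ 1 := by
  induction m with
  | zero => exact ⟨h0, h1⟩
  | succ n ih => rw [gg_succ']; exact ⟨hh_nonneg _, hh_le_one _⟩

lemma gg_lip (m : ℕ) (u v : ℝ) : |gg m u - gg m v| ≤ 2 ^ m * |u - v| := by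
  induction m with
  | zero => simp [gg]
  | succ n ih =>
      rw [gg_succ', gg_succ']
      calc |hh (gg n u) - hh (gg n v)| ≤ 2 * |gg n u - gg n v| := hh_lip _ _
        _ ≤ 2 * (2 ^ n * |u - v|) := by linarith
        _ = 2 ^ (n+1) * |u - v| := by ring

lemma SS_rec (m : ℕ) (u : ℝ) : SS (m+1) u = u - hh u / 2 + SS m (hh u) / 4 := by
  induction m generalizing u with
  | zero => simp [SS, gg]; ring
  | succ n ih =>
      show SS (n+1) u - gg (n+2) u / 4 ^ (n+2) = _
      rw [ih u, gg_succ]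
      show _ = u - hh u / 2 + (SS n (hh u) - gg (n+1) (hh u) / 4 ^ (n+1)) / 4
      ring

lemma SS_lip (m : ℕ) (u v : ℝ) : |SS m u - SS m v| ≤ 2 * |u - v| := by
  have key : ∀ m, |SS m u - SS m v| ≤ (2 - (1/2) ^ m) * |u - v| := by
    intro m
    induction m with
    | zero => simp [SS]; nlinarith [abs_nonneg (u - v)]
    | succ n ih =>
        have h1 := gg_lip (n+1) u v
        have h2 : |SS (n+1) u - SS (n+1) v| ≤
            |SS n u - SS n v| + |gg (n+1) u - gg (n+1) v| / 4 ^ (n+1) := by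
          show |SS n u - gg (n+1) u / 4 ^ (n+1) - (SS n v - gg (n+1) v / 4 ^ (n+1))| ≤ _
          have : SS n u - gg (n+1) u / 4 ^ (n+1) - (SS n v - gg (n+1) v / 4 ^ (n+1)) =
              (SS n u - SS n v) - (gg (n+1) u - gg (n+1) v) / 4 ^ (n+1) := by ring
          rw [this]
          refine (abs_sub _ _).trans ?_
          rw [abs_div, abs_of_nonneg (by positivity : (0:ℝ) ≤ 4 ^ (n+1))]
        have h4 : (0:ℝ) < 4 ^ (n+1) := by positivity
        have h6 : ((1:ℝ)/2) ^ (n+1) * 4 ^ (n+1) = 2 ^ (n+1) := by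
          rw [← mul_pow]; norm_num
        have h5 : |gg (n+1) u - gg (n+1) v| / 4 ^ (n+1) ≤ (1/2) ^ (n+1) * |u - v| := by
          rw [div_le_iff₀ h4]
          calc |gg (n+1) u - gg (n+1) v| ≤ 2 ^ (n+1) * |u - v| := h1
            _ = (1/2) ^ (n+1) * |u - v| * 4 ^ (n+1) := by rw [← h6]; ring
        have h7 : (1/2:ℝ) ^ (n+1) ≤ (1/2) ^ n := by
          apply pow_le_pow_of_le_one <;> norm_num
        have h8 : ((1:ℝ)/2) ^ (n+1) * |u-v| ≥ 0 := by positivity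
        calc |SS (n+1) u - SS (n+1) v| ≤ |SS n u - SS n v| + (1/2) ^ (n+1) * |u - v| := by
              linarith [h2, h5]
          _ ≤ (2 - (1/2)^n) * |u - v| + (1/2) ^ (n+1) * |u - v| := by linarith
          _ ≤ (2 - (1/2)^(n+1)) * |u - v| := by
              have : (1/2:ℝ)^n = 2 * (1/2)^(n+1) := by ring
              nlinarith [abs_nonneg (u - v)]
  refine (key m).trans ?_
  have : (0:ℝ) < (1/2)^m := by positivity
  nlinarith [abs_nonneg (u - v)]

lemma SS_sq (m : ℕ) {u : ℝ} (h0 : 0 ≤ u) (h1 : u ≤ 1) :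
    SS m u = u ^ 2 + (gg m u - (gg m u) ^ 2) / 4 ^ m := by
  induction m generalizing u with
  | zero =>
      show u = u ^ 2 + (u - u ^ 2) / 4 ^ 0
      norm_num
  | succ n ih =>
      rw [SS_rec, ih (hh_nonneg u) (hh_le_one u), ← gg_succ]
      linear_combination hh_sq h0 h1

lemma SS_one_le (m : ℕ) {u : ℝ} (h : 1 ≤ u) : SS m u = u := by
  induction m with
  | zero => rfl
  | succ n ih =>
      show SS n u - gg (n+1) u / 4 ^ (n+1) = u
      rw [ih, gg_succ, hh_zero_right h, gg_zero]
      simp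

lemma SS_nonneg (m : ℕ) {u : ℝ} (hu : 0 ≤ u) : 0 ≤ SS m u := by
  rcases le_total u 1 with h | h
  · rw [SS_sq m hu h]
    obtain ⟨a, b⟩ := gg_mem (m := m) hu h
    have : (0:ℝ) < 4 ^ m := by positivity
    have : 0 ≤ gg m u - (gg m u)^2 := by nlinarith
    positivity
  · rw [SS_one_le m h]; linarith
def netNN (m : ℕ) (r : ℝ) : NN where
  Dm := m + 1
  l := fun k => if k = 0 then 1 else if k = 1 then 2 else if k = m + 2 then 1 else 4
  V := fun k i j =>
    if k = 0 then (if i = 0 then 1 / r else -(1 / r))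
    else if k = 1 then 1
    else if k = m + 1 then
      r ^ 2 * (if j = 0 then -(2 / 4 ^ m) else if j = 1 then 4 / 4 ^ m
        else if j = 2 then -(2 / 4 ^ m) else 1)
    else
      if i = 3 then (if j = 0 then -(2 / 4 ^ (k - 1)) else if j = 1 then 4 / 4 ^ (k - 1)
        else if j = 2 then -(2 / 4 ^ (k - 1)) else 1)
      else (if j = 0 then 2 else if j = 1 then -4 else if j = 2 then 2 else 0)
  b := fun k i =>
    if k = 0 then 0 else if k = m + 1 then 0
    else if i = 1 then -(1/2) else if i = 2 then -1 else 0

example (m : ℕ) (r : ℝ) : (netNN m r).l 0 = 1 := rfl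
example (m : ℕ) (r : ℝ) : (netNN m r).l 1 = 2 := rfl
example (n : ℕ) (r x : ℝ) :
    trunc ((netNN n r).l 0) (fun j => if j = 0 then x else 0) 0 = x := rfl

lemma netNN_inv (n : ℕ) (r x : ℝ) (hr : 0 < r) :
    ∀ t, t + 1 ≤ n + 1 →
    ((netNN (n+1) r).hidden ReLU (t + 2)
        (trunc ((netNN (n+1) r).l 0) (fun j => if j = 0 then x else 0)) 0 = gg t (|x|/r)) ∧
    ((netNN (n+1) r).hidden ReLU (t + 2)
        (trunc ((netNN (n+1) r).l 0) (fun j => if j = 0 then x else 0)) 1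
        = max (gg t (|x|/r) - 1/2) 0) ∧
    ((netNN (n+1) r).hidden ReLU (t + 2)
        (trunc ((netNN (n+1) r).l 0) (fun j => if j = 0 then x else 0)) 2
        = max (gg t (|x|/r) - 1) 0) ∧
    ((netNN (n+1) r).hidden ReLU (t + 2)
        (trunc ((netNN (n+1) r).l 0) (fun j => if j = 0 then x else 0)) 3 = SS t (|x|/r)) := by
  set m := n + 1 with hm
  set u := |x| / r with hu
  have hu0 : 0 ≤ u := by positivity
  set inp : ℕ → ℝ := trunc ((netNN m r).l 0) (fun j => if j = 0 then x else 0) with hinp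
  have hinp0 : inp 0 = x := rfl
  have h10 : (netNN m r).hidden ReLU 1 inp 0 = max (1/r * x) 0 := by
    show ReLU ((netNN m r).aff 0 inp 0) = _
    rw [NN.aff, show (netNN m r).l 0 = 1 from rfl, Finset.sum_range_one, hinp0]
    show max (1/r * x + 0) 0 = _
    rw [add_zero]
  have h11 : (netNN m r).hidden ReLU 1 inp 1 = max (-(1/r) * x) 0 := by
    show ReLU ((netNN m r).aff 0 inp 1) = _
    rw [NN.aff, show (netNN m r).l 0 = 1 from rfl, Finset.sum_range_one, hinp0]
    show max (-(1/r) * x + 0) 0 = _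
    rw [add_zero]
  have hsum : max (1/r * x) 0 + max (-(1/r) * x) 0 = u := by
    rw [show (1:ℝ)/r * x = x/r by ring, show -((1:ℝ)/r) * x = -(x/r) by ring,
      max_zero_add_max_neg_zero_eq_abs_self, hu, abs_div, abs_of_pos hr]
  intro t
  induction t with
  | zero =>
    intro _
    have key : ∀ i, (netNN m r).hidden ReLU 2 inp i
        = max (u + (if i = 1 then -(1/2 : ℝ) else if i = 2 then -1 else 0)) 0 := by
      intro i
      show ReLU ((netNN m r).aff 1 ((netNN m r).hidden ReLU 1 inp) i) = _
      rw [NN.aff, show (netNN m r).l 1 = 2 from rfl]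
      rw [Finset.sum_range_succ, Finset.sum_range_succ, Finset.sum_range_zero]
      have hV : ∀ j, (netNN m r).V 1 i j = 1 := fun j => rfl
      have hb : (netNN m r).b 1 i
          = (if i = 1 then -(1/2 : ℝ) else if i = 2 then -1 else 0) := by
        show (if 1 = m + 1 then (0:ℝ)
          else if i = 1 then -(1/2) else if i = 2 then -1 else 0) = _
        rw [if_neg (by omega : ¬1 = m + 1)]
      rw [hV, hV, hb, h10, h11, one_mul, one_mul, zero_add, hsum]
      rfl
    refine ⟨?_, ?_, ?_, ?_⟩
    · rw [key 0]
      show max (u + 0) 0 = u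
      rw [add_zero]; exact max_eq_left hu0
    · rw [key 1]
      show max (u + -(1/2)) 0 = max (u - 1/2) 0
      rw [← sub_eq_add_neg]
    · rw [key 2]
      show max (u + -1) 0 = max (u - 1) 0
      rw [← sub_eq_add_neg]
    · rw [key 3]
      show max (u + 0) 0 = u
      rw [add_zero]; exact max_eq_left hu0
  | succ s ih =>
    intro hts
    obtain ⟨ia, ib, ic, id⟩ := ih (by omega)
    have hg0 : 0 ≤ gg s u := gg_nonneg s hu0
    have hl4 : (netNN m r).l (s + 2) = 4 := by
      show (if s + 2 = 0 then 1 else if s + 2 = 1 then 2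
        else if s + 2 = m + 2 then 1 else 4) = 4
      rw [if_neg (by omega), if_neg (by omega), if_neg (by omega)]
    have hVmid : ∀ i j, (netNN m r).V (s + 2) i j =
        (if i = 3 then (if j = 0 then -(2 / 4 ^ (s+1) : ℝ) else if j = 1 then 4 / 4 ^ (s+1)
          else if j = 2 then -(2 / 4 ^ (s+1)) else 1)
        else (if j = 0 then 2 else if j = 1 then -4 else if j = 2 then 2 else 0)) := by
      intro i j
      show (if s + 2 = 0 then (if i = 0 then 1 / r else -(1 / r))
        else if s + 2 = 1 then 1
        else if s + 2 = m + 1 then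
          r ^ 2 * (if j = 0 then -(2 / 4 ^ m) else if j = 1 then 4 / 4 ^ m
            else if j = 2 then -(2 / 4 ^ m) else 1)
        else if i = 3 then (if j = 0 then -(2 / 4 ^ (s+1) : ℝ) else if j = 1 then 4 / 4 ^ (s+1)
          else if j = 2 then -(2 / 4 ^ (s+1)) else 1)
        else (if j = 0 then 2 else if j = 1 then -4 else if j = 2 then 2 else 0)) = _
      rw [if_neg (by omega), if_neg (by omega), if_neg (by omega)]
    have hbmid : ∀ i, (netNN m r).b (s + 2) i
        = (if i = 1 then -(1/2 : ℝ) else if i = 2 then -1 else 0) := by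
      intro i
      show (if s + 2 = 0 then (0:ℝ) else if s + 2 = m + 1 then 0 else
        if i = 1 then -(1/2) else if i = 2 then -1 else 0) = _
      rw [if_neg (by omega), if_neg (by omega)]
    have key : ∀ i, (netNN m r).hidden ReLU (s + 3) inp i
        = ReLU ((∑ j ∈ Finset.range 4,
            (netNN m r).V (s+2) i j * (netNN m r).hidden ReLU (s+2) inp j)
          + (netNN m r).b (s+2) i) := by
      intro i
      show ReLU ((netNN m r).aff (s+2) ((netNN m r).hidden ReLU (s+2) inp) i) = _
      rw [NN.aff, hl4]
    refine ⟨?_, ?_, ?_, ?_⟩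
    · rw [key 0, Finset.sum_range_succ, Finset.sum_range_succ, Finset.sum_range_succ,
        Finset.sum_range_succ, Finset.sum_range_zero, hVmid, hVmid, hVmid, hVmid, hbmid,
        ia, ib, ic, id]
      show max (0 + 2 * gg s u + -4 * max (gg s u - 1/2) 0 + 2 * max (gg s u - 1) 0
        + 0 * SS s u + 0) 0 = gg (s+1) u
      rw [show (0:ℝ) + 2 * gg s u + -4 * max (gg s u - 1/2) 0 + 2 * max (gg s u - 1) 0
          + 0 * SS s u + 0 = hh (gg s u) by rw [hh, max_eq_left hg0]; ring, ← gg_succ']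
      exact max_eq_left (gg_nonneg _ hu0)
    · rw [key 1, Finset.sum_range_succ, Finset.sum_range_succ, Finset.sum_range_succ,
        Finset.sum_range_succ, Finset.sum_range_zero, hVmid, hVmid, hVmid, hVmid, hbmid,
        ia, ib, ic, id]
      show max (0 + 2 * gg s u + -4 * max (gg s u - 1/2) 0 + 2 * max (gg s u - 1) 0
        + 0 * SS s u + -(1/2)) 0 = max (gg (s+1) u - 1/2) 0
      rw [show (0:ℝ) + 2 * gg s u + -4 * max (gg s u - 1/2) 0 + 2 * max (gg s u - 1) 0
          + 0 * SS s u + -(1/2) = hh (gg s u) - 1/2 by rw [hh, max_eq_left hg0]; ring,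
        ← gg_succ']
    · rw [key 2, Finset.sum_range_succ, Finset.sum_range_succ, Finset.sum_range_succ,
        Finset.sum_range_succ, Finset.sum_range_zero, hVmid, hVmid, hVmid, hVmid, hbmid,
        ia, ib, ic, id]
      show max (0 + 2 * gg s u + -4 * max (gg s u - 1/2) 0 + 2 * max (gg s u - 1) 0
        + 0 * SS s u + -1) 0 = max (gg (s+1) u - 1) 0
      rw [show (0:ℝ) + 2 * gg s u + -4 * max (gg s u - 1/2) 0 + 2 * max (gg s u - 1) 0
          + 0 * SS s u + -1 = hh (gg s u) - 1 by rw [hh, max_eq_left hg0]; ring,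
        ← gg_succ']
    · rw [key 3, Finset.sum_range_succ, Finset.sum_range_succ, Finset.sum_range_succ,
        Finset.sum_range_succ, Finset.sum_range_zero, hVmid, hVmid, hVmid, hVmid, hbmid,
        ia, ib, ic, id]
      show max (0 + -(2 / 4 ^ (s+1)) * gg s u + 4 / 4 ^ (s+1) * max (gg s u - 1/2) 0
        + -(2 / 4 ^ (s+1)) * max (gg s u - 1) 0 + 1 * SS s u + 0) 0 = SS (s+1) u
      rw [show (0:ℝ) + -(2 / 4 ^ (s+1)) * gg s u + 4 / 4 ^ (s+1) * max (gg s u - 1/2) 0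
          + -(2 / 4 ^ (s+1)) * max (gg s u - 1) 0 + 1 * SS s u + 0
          = SS s u - hh (gg s u) / 4 ^ (s+1) by rw [hh, max_eq_left hg0]; ring,
        ← gg_succ', show SS s u - gg (s+1) u / 4 ^ (s+1) = SS (s+1) u from rfl]
      exact max_eq_left (SS_nonneg _ hu0)

lemma netNN_real (n : ℕ) (r x : ℝ) (hr : 0 < r) :
    (netNN (n+1) r).real1 ReLU x = r ^ 2 * SS (n+1) (|x| / r) := by
  obtain ⟨ia, ib, ic, id⟩ := netNN_inv n r x hr n (le_refl _)
  have hu0 : (0:ℝ) ≤ |x| / r := by positivity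
  have hg0 : 0 ≤ gg n (|x|/r) := gg_nonneg n hu0
  have hl4 : (netNN (n+1) r).l (n + 2) = 4 := by
    show (if n + 2 = 0 then 1 else if n + 2 = 1 then 2
      else if n + 2 = (n+1) + 2 then 1 else 4) = 4
    rw [if_neg (by omega), if_neg (by omega), if_neg (by omega)]
  have hV : ∀ j, (netNN (n+1) r).V (n+2) 0 j =
      r ^ 2 * (if j = 0 then -(2 / 4 ^ (n+1) : ℝ) else if j = 1 then 4 / 4 ^ (n+1)
        else if j = 2 then -(2 / 4 ^ (n+1)) else 1) := by
    intro j
    show (if n + 2 = 0 then (if (0:ℕ) = 0 then 1 / r else -(1 / r))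
      else if n + 2 = 1 then 1
      else if n + 2 = (n+1) + 1 then
        r ^ 2 * (if j = 0 then -(2 / 4 ^ (n+1) : ℝ) else if j = 1 then 4 / 4 ^ (n+1)
          else if j = 2 then -(2 / 4 ^ (n+1)) else 1)
      else if (0:ℕ) = 3 then (if j = 0 then -(2 / 4 ^ (n + 2 - 1) : ℝ)
          else if j = 1 then 4 / 4 ^ (n + 2 - 1)
          else if j = 2 then -(2 / 4 ^ (n + 2 - 1)) else 1)
        else (if j = 0 then 2 else if j = 1 then -4 else if j = 2 then 2 else 0)) = _
    rw [if_neg (by omega), if_neg (by omega), if_pos rfl]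
  have hb : (netNN (n+1) r).b (n+2) 0 = 0 := by
    show (if n + 2 = 0 then (0:ℝ) else if n + 2 = (n+1) + 1 then 0
      else if (0:ℕ) = 1 then -(1/2) else if (0:ℕ) = 2 then -1 else 0) = 0
    rw [if_neg (by omega), if_pos rfl]
  show (netNN (n+1) r).aff (n+2) ((netNN (n+1) r).hidden ReLU (n+2)
      (trunc ((netNN (n+1) r).l 0) (fun j => if j = 0 then x else 0))) 0
    = r ^ 2 * SS (n+1) (|x| / r)
  rw [NN.aff, hl4, Finset.sum_range_succ, Finset.sum_range_succ, Finset.sum_range_succ,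
    Finset.sum_range_succ, Finset.sum_range_zero, hV, hV, hV, hV, hb, ia, ib, ic, id]
  norm_num
  have e2 : SS (n+1) (|x|/r) = SS n (|x|/r) - hh (gg n (|x|/r)) / 4 ^ (n+1) := by
    rw [show SS (n+1) (|x|/r)
        = SS n (|x|/r) - gg (n+1) (|x|/r) / 4 ^ (n+1) from rfl, gg_succ']
  rw [e2, hh, max_eq_left hg0]
  ring

lemma netNN_P (n : ℕ) (r : ℝ) : (netNN (n+1) r).P = 20 * (n+1) + 1 := by
  have hcong : ∀ k ∈ Finset.range (n+3),
      (netNN (n+1) r).l (k+1) * ((netNN (n+1) r).l k + 1)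
      = (if k = 0 then 4 else if k = 1 then 12 else if k = n + 2 then 5 else 20) := by
    intro k hk
    simp only [Finset.mem_range] at hk
    show (if k + 1 = 0 then 1 else if k + 1 = 1 then 2 else if k + 1 = (n+1)+2 then 1 else 4)
      * ((if k = 0 then 1 else if k = 1 then 2 else if k = (n+1)+2 then 1 else 4) + 1) = _
    split_ifs <;> first | omega | exact (False.elim ‹False›)
  have hsum : ∀ N : ℕ, (∑ k ∈ Finset.range (N+2),
      (if k = 0 then 4 else if k = 1 then 12 else 20)) = 16 + 20 * N := by
    intro N
    induction N with
    | zero => decide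
    | succ M ihM =>
        rw [show M + 1 + 2 = (M + 2) + 1 from rfl, Finset.sum_range_succ, ihM,
          if_neg (by omega), if_neg (by omega)]
        ring
  show (∑ k ∈ Finset.range (n+3),
      (netNN (n+1) r).l (k+1) * ((netNN (n+1) r).l k + 1)) = 20 * (n+1) + 1
  rw [Finset.sum_congr rfl hcong, show n + 3 = (n+2) + 1 from rfl, Finset.sum_range_succ,
    if_neg (by omega), if_neg (by omega), if_pos rfl]
  have : (∑ k ∈ Finset.range (n+2), (if k = 0 then 4 else if k = 1 then 12
      else if k = n + 2 then 5 else 20))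
      = ∑ k ∈ Finset.range (n+2), (if k = 0 then 4 else if k = 1 then 12 else 20) := by
    apply Finset.sum_congr rfl
    intro k hk
    simp only [Finset.mem_range] at hk
    split_ifs <;> first | omega | exact (False.elim ‹False›)
  rw [this, hsum]
  omega
/-- Lemma 4.3: approximation of the square function on `[-r, r]` by ReLU
networks. -/
theorem square_function_approximation (r ε : ℝ) (hr : 0 < r) (hε0 : 0 < ε) (hε1 : ε ≤ 1) :
    ∃ ψ : NN, ψ.l 0 = 1 ∧ ψ.l ψ.depth = 1 ∧
      (∀ x y : ℝ, |ψ.real1 ReLU x - ψ.real1 ReLU y| ≤ 2 * r * |x - y|) ∧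
      (∀ x : ℝ, |x| ≤ r → |ψ.real1 ReLU x - x ^ 2| ≤ ε) ∧
      (∀ x : ℝ, r < |x| → ψ.real1 ReLU x = r * |x|) ∧
      ((ψ.P : ℝ) ≤ max 52 (80 * Real.logb 2 r + 40 * Real.logb 2 ε⁻¹ - 28)) := by
  have hrne : r ≠ 0 := ne_of_gt hr
  set Q : ℝ := r ^ 2 / ε with hQ
  have hQ0 : 0 < Q := by positivity
  set c : ℕ := ⌈Real.logb 2 Q / 2⌉₊ with hc
  set n : ℕ := max 1 c - 1 with hn
  have hnc : n + 1 = max 1 c := by omega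
  -- key exponent bound : Q ≤ 4 ^ (n+1)
  have hkey : Q ≤ (4:ℝ) ^ (n + 1) := by
    rcases le_total Q 4 with h4 | h4
    · calc Q ≤ 4 := h4
        _ = (4:ℝ) ^ 1 := (pow_one 4).symm
        _ ≤ (4:ℝ) ^ (n+1) := pow_le_pow_right₀ (by norm_num) (by omega)
    · have hc1 : Real.logb 2 Q / 2 ≤ ((n + 1 : ℕ) : ℝ) := by
        rw [hnc]
        calc Real.logb 2 Q / 2 ≤ (c : ℝ) := Nat.le_ceil _
          _ ≤ ((max 1 c : ℕ) : ℝ) := by exact_mod_cast Nat.le_max_right 1 c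
      have h2 : Real.logb 2 Q ≤ 2 * ((n+1 : ℕ) : ℝ) := by linarith
      have h3 : (2:ℝ) ^ (Real.logb 2 Q) ≤ (2:ℝ) ^ (2 * ((n+1 : ℕ) : ℝ)) :=
        (Real.rpow_le_rpow_left_iff (by norm_num : (1:ℝ) < 2)).mpr h2
      rw [Real.rpow_logb (by norm_num) (by norm_num) hQ0] at h3
      calc Q ≤ (2:ℝ) ^ (2 * ((n+1 : ℕ) : ℝ)) := h3
        _ = (4:ℝ) ^ (n+1) := by
          rw [show (2:ℝ) * ((n+1:ℕ) : ℝ) = ((2 * (n+1) : ℕ) : ℝ) by push_cast; ring,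
            Real.rpow_natCast, pow_mul]
          norm_num
  have h4pos : (0:ℝ) < 4 ^ (n+1) := by positivity
  have herr : r ^ 2 / 4 ^ (n+1) ≤ ε := by
    rw [div_le_iff₀ h4pos]
    rw [hQ, div_le_iff₀ hε0] at hkey
    linarith
  refine ⟨netNN (n+1) r, rfl, ?_, ?_, ?_, ?_, ?_⟩
  · show (netNN (n+1) r).l ((n + 2) + 1) = 1
    show (if n + 3 = 0 then 1 else if n + 3 = 1 then 2
      else if n + 3 = (n+1) + 2 then 1 else 4) = 1
    rw [if_neg (by omega), if_neg (by omega), if_pos rfl]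
  · -- Lipschitz
    intro x y
    rw [netNN_real n r x hr, netNN_real n r y hr, ← mul_sub, abs_mul,
      abs_of_nonneg (by positivity : (0:ℝ) ≤ r ^ 2)]
    have h1 := SS_lip (n+1) (|x|/r) (|y|/r)
    have h2 : |(|x|/r) - (|y|/r)| = |(|x| - |y|)| / r := by
      rw [div_sub_div_same, abs_div, abs_of_pos hr]
    have h3 : |(|x| - |y|)| ≤ |x - y| := abs_abs_sub_abs_le_abs_sub x y
    calc r ^ 2 * |SS (n+1) (|x|/r) - SS (n+1) (|y|/r)|
        ≤ r ^ 2 * (2 * |(|x|/r) - (|y|/r)|) :=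
          mul_le_mul_of_nonneg_left h1 (by positivity)
      _ = 2 * r * |(|x| - |y|)| := by rw [h2]; field_simp
      _ ≤ 2 * r * |x - y| := mul_le_mul_of_nonneg_left h3 (by positivity)
  · -- approximation of the square
    intro x hx
    rw [netNN_real n r x hr]
    have hu0 : (0:ℝ) ≤ |x| / r := by positivity
    have hu1 : |x| / r ≤ 1 := by rw [div_le_one hr]; exact hx
    obtain ⟨hg0, hg1⟩ := gg_mem (m := n+1) hu0 hu1
    have hx2 : r ^ 2 * (|x|/r) ^ 2 = x ^ 2 := by
      rw [div_pow, sq_abs]; field_simp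
    rw [SS_sq (n+1) hu0 hu1, mul_add, hx2]
    have hgb : 0 ≤ gg (n+1) (|x|/r) - (gg (n+1) (|x|/r)) ^ 2 ∧
        gg (n+1) (|x|/r) - (gg (n+1) (|x|/r)) ^ 2 ≤ 1/4 := by
      constructor
      · nlinarith [mul_nonneg hg0 (by linarith : (0:ℝ) ≤ 1 - gg (n+1) (|x|/r))]
      · nlinarith [sq_nonneg (gg (n+1) (|x|/r) - 1/2)]
    rw [show x ^ 2 + r ^ 2 * ((gg (n+1) (|x|/r) - gg (n+1) (|x|/r) ^ 2) / 4 ^ (n+1)) - x ^ 2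
        = r ^ 2 * ((gg (n+1) (|x|/r) - gg (n+1) (|x|/r) ^ 2) / 4 ^ (n+1)) by ring,
      abs_of_nonneg (mul_nonneg (by positivity) (div_nonneg hgb.1 (le_of_lt h4pos)))]
    calc r ^ 2 * ((gg (n+1) (|x|/r) - gg (n+1) (|x|/r) ^ 2) / 4 ^ (n+1))
        ≤ r ^ 2 * ((1/4) / 4 ^ (n+1)) := by
          gcongr
          exact hgb.2
      _ = (r ^ 2 / 4 ^ (n+1)) / 4 := by ring
      _ ≤ ε / 4 := by linarith [herr]
      _ ≤ ε := by linarith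
  · -- outside the interval
    intro x hx
    rw [netNN_real n r x hr, SS_one_le (n+1) (by rw [le_div_iff₀ hr]; linarith)]
    field_simp
  · -- parameter bound
    rw [netNN_P n r]
    have hlogQ : Real.logb 2 Q = 2 * Real.logb 2 r + Real.logb 2 ε⁻¹ := by
      rw [hQ, Real.logb_div (by positivity) (ne_of_gt hε0), Real.logb_pow, Real.logb_inv]
      ring
    rcases le_or_gt c 1 with hc1 | hc1
    · have : n = 0 := by omega
      rw [this]
      calc ((20 * (0+1) + 1 : ℕ) : ℝ) = 21 := by norm_num
        _ ≤ 52 := by norm_num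
        _ ≤ max 52 _ := le_max_left _ _
    · have hne : n + 1 = c := by omega
      have hQ2 : 1 < Real.logb 2 Q / 2 := by
        have := (Nat.lt_ceil (n := 1)).mp (by omega : 1 < c)
        simpa using this
      have hceil : (c : ℝ) < Real.logb 2 Q / 2 + 1 :=
        Nat.ceil_lt_add_one (by linarith)
      have hcast : ((20 * (n+1) + 1 : ℕ) : ℝ) = 20 * ((n+1 : ℕ) : ℝ) + 1 := by push_cast; ring
      rw [hcast]
      have hn1 : ((n+1 : ℕ) : ℝ) = (c : ℝ) := by exact_mod_cast hne
      refine le_trans ?_ (le_max_right _ _)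
      rw [hn1]
      have hQbig : 2 < Real.logb 2 Q := by linarith
      rw [hlogQ] at hQbig hceil
      linarith [hceil, hQbig]
end
end

section
/- Fix K, r ∈ [1,∞) and, for each i ∈ ℕ, let f_i : ℝ → ℝ be K-Lipschitz with |f_i(0)| ≤ K and let g_i : ℝ → ℝ be 1-Lipschitz with g_i(0) = 0. Define h_d : ℝ^d → ℝ recursively by h_1 = f_1 and h_d(x) = g_d(max{h_{d−1}(x_1,…,x_{d−1}), f_d(x_d)}) for d ≥ 2. Then for every d ∈ ℕ and ε ∈ (0,1] there exists a skeleton φ with ReLU-realization R_ReLU(φ) : ℝ^d → ℝ such that: 1) sup_{x∈[−r,r]^d} |h_d(x) − R_ReLU(φ)(x)| ≤ ε; 2) R_ReLU(φ) is K-Lipschitz on ℝ^d; 3) P(φ) ≤ (3/7)·10⁴·K³·r·d^{13/2}·ε^{−1}. -/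
open scoped BigOperators ENNReal

noncomputable section

/-- The recursively defined functions `h_d` built from maxima of
one-dimensional Lipschitz functions: `h_1 = f_1` and
`h_d(x) = g_d(max{h_{d-1}(x_1, …, x_{d-1}), f_d(x_d)})`.  Here `hrec f g d`
corresponds to `h_{d+1}`. -/
def hrec (f g : ℕ → ℝ → ℝ) : (d : ℕ) → EuclideanSpace ℝ (Fin (d + 1)) → ℝ
  | 0 => fun x => f 1 (x 0)
  | d + 1 => fun x =>
      g (d + 2) (max (hrec f g d (WithLp.toLp 2 fun i : Fin (d + 1) => x i.castSucc)) (f (d + 2) (x (Fin.last (d + 1)))))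

/-!
Every `f i` is replaced by its piecewise-linear interpolant on `N` equal cells of `[-r, r]` and
every `g i` by its interpolant on `[-B, B]`, `B = 2Kr + 1`. An interpolant is a sum of `N + 1`
ReLUs, has the Lipschitz constant of the function it interpolates, and is `2L · mesh`-close to it.
Since `max a b = a + ReLU (b - a)` and `x = ReLU x - ReLU (-x)`, the recursion defining `h_d`
becomes a chain of `2d + 1` two-layer networks whose consecutive hidden widths are at most
`2d + 3` and `(d + 1)(N + 1)`, hence `O(d³ N)` parameters. The `g i` are 1-Lipschitz, so the
interpolation errors only add up, to `O(K r d / N)`; thus `N ≈ 16 K r (d + 1) / ε` cells suffice.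
-/

open Finset

lemma ReLU_sub_sub_ReLU_sub (x p q : ℝ) (hpq : p ≤ q) :
    ReLU (x - p) - ReLU (x - q) = min (max x p) q - p := by
  simp only [ReLU]
  rcases le_total x p with h | h
  · rw [max_eq_right (by linarith), max_eq_right (by linarith), max_eq_right h, min_eq_left hpq]
    ring
  rcases le_total x q with h' | h'
  · rw [max_eq_left (by linarith), max_eq_right (by linarith), max_eq_left h, min_eq_left h']
    ring
  · rw [max_eq_left (by linarith), max_eq_left (by linarith), max_eq_left h, min_eq_right h']
    ring

lemma ReLU_sub_ReLU_neg (x : ℝ) : ReLU x - ReLU (-x) = x := by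
  simp only [ReLU]
  rcases le_total x 0 with h | h
  · rw [max_eq_right h, max_eq_left (by linarith)]; ring
  · rw [max_eq_left h, max_eq_right (by linarith)]; ring

lemma add_ReLU_sub (a b : ℝ) : a + ReLU (b - a) = max a b := by
  simp only [ReLU]
  rcases le_total a b with h | h
  · rw [max_eq_left (by linarith), max_eq_right h]; ring
  · rw [max_eq_right (by linarith), max_eq_left h]; ring

lemma clamp_sub_clamp_le (a b : ℝ) {x y : ℝ} (hxy : x ≤ y) :
    min (max y a) b - min (max x a) b ≤ y - x := by
  have h := (abs_min_sub_min_le_max (max y a) b (max x a) b).trans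
    (max_le (abs_max_sub_max_le_abs y x a) (by simp))
  rw [abs_of_nonneg (sub_nonneg.2 hxy)] at h
  exact (le_abs_self _).trans h

namespace PiecewiseLinear

section

variable (R : ℝ) (N : ℕ)

def knot (j : ℕ) : ℝ := -R + j * (2 * R / N)

def slope (f : ℝ → ℝ) (j : ℕ) : ℝ :=
  if j < N then (f (knot R N (j + 1)) - f (knot R N j)) / (2 * R / N) else 0

def reluCoeff (f : ℝ → ℝ) (j : ℕ) : ℝ :=
  slope R N f j - if j = 0 then 0 else slope R N f (j - 1)

/-- The piecewise-linear interpolant of `f` at the `N + 1` equispaced knots of `[-R, R]`,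
constant outside `[-R, R]`. -/
def interp (f : ℝ → ℝ) (x : ℝ) : ℝ :=
  f (-R) + ∑ j ∈ range (N + 1), reluCoeff R N f j * ReLU (x - knot R N j)

def cellClamp (j : ℕ) (x : ℝ) : ℝ := min (max x (knot R N j)) (knot R N (j + 1))

end

variable {R : ℝ} {N : ℕ}

lemma mesh_pos (hR : 0 < R) (hN : 0 < N) : 0 < 2 * R / N := by
  have : (0 : ℝ) < N := by exact_mod_cast hN
  positivity

lemma knot_succ (j : ℕ) : knot R N (j + 1) = knot R N j + 2 * R / N := by
  simp only [knot]; push_cast; ring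

lemma knot_zero : knot R N 0 = -R := by simp [knot]

lemma knot_mono (hR : 0 < R) (hN : 0 < N) {i j : ℕ} (hij : i ≤ j) :
    knot R N i ≤ knot R N j := by
  have : (i : ℝ) ≤ j := by exact_mod_cast hij
  simp only [knot]
  nlinarith [mesh_pos hR hN]

lemma cellClamp_mono (j : ℕ) {x y : ℝ} (hxy : x ≤ y) : cellClamp R N j x ≤ cellClamp R N j y :=
  min_le_min (max_le_max hxy le_rfl) le_rfl

lemma interp_eq_sum_slope (f : ℝ → ℝ) (hR : 0 < R) (hN : 0 < N) (x : ℝ) :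
    interp R N f x = f (-R) + ∑ j ∈ range N, slope R N f j * (cellClamp R N j x - knot R N j) := by
  have hshift : ∑ j ∈ range (N + 1),
      (if j = 0 then 0 else slope R N f (j - 1)) * ReLU (x - knot R N j)
      = ∑ j ∈ range N, slope R N f j * ReLU (x - knot R N (j + 1)) := by
    simp [sum_range_succ']
  have hlast : slope R N f N = 0 := if_neg (lt_irrefl N)
  simp only [interp, reluCoeff, sub_mul, sum_sub_distrib]
  rw [sum_range_succ _ N, hlast, zero_mul, add_zero, hshift, ← sum_sub_distrib]
  congr 1
  refine sum_congr rfl fun j _ => ?_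
  rw [← mul_sub, ReLU_sub_sub_ReLU_sub x _ _ (knot_mono hR hN j.le_succ)]
  rfl

lemma abs_slope_le (f : ℝ → ℝ) {L : ℝ} (hR : 0 < R) (hN : 0 < N) (hL : 0 ≤ L)
    (hf : ∀ x y, |f x - f y| ≤ L * |x - y|) (j : ℕ) : |slope R N f j| ≤ L := by
  unfold slope
  split
  · have hmesh := mesh_pos hR hN
    rw [abs_div, abs_of_pos hmesh, div_le_iff₀ hmesh]
    simpa [knot_succ, abs_of_pos hmesh] using hf (knot R N (j + 1)) (knot R N j)
  · simpa using hL

lemma sum_cellClamp_sub_knot (hR : 0 < R) (hN : 0 < N) (x : ℝ) (n : ℕ) :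
    ∑ j ∈ range n, (cellClamp R N j x - knot R N j)
      = min (max x (knot R N 0)) (knot R N n) - knot R N 0 := by
  induction n with
  | zero => simp
  | succ m ih =>
    rw [sum_range_succ, ih]
    have h0m : knot R N 0 ≤ knot R N m := knot_mono hR hN m.zero_le
    have hmm : knot R N m ≤ knot R N (m + 1) := knot_mono hR hN m.le_succ
    unfold cellClamp
    rcases le_total x (knot R N m) with h | h
    · rw [max_eq_right h, min_eq_left hmm, min_eq_left (le_trans (max_le h h0m) hmm),
        min_eq_left (max_le h h0m)]
      ring
    · rw [max_eq_left h, max_eq_left (le_trans h0m h), min_eq_right h]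
      rcases le_total x (knot R N (m + 1)) with h' | h'
      · rw [min_eq_left h']; ring
      · rw [min_eq_right h']; ring

lemma abs_interp_sub_interp_le (f : ℝ → ℝ) {L : ℝ} (hR : 0 < R) (hN : 0 < N) (hL : 0 ≤ L)
    (hf : ∀ x y, |f x - f y| ≤ L * |x - y|) (x y : ℝ) :
    |interp R N f x - interp R N f y| ≤ L * |x - y| := by
  wlog hxy : x ≤ y generalizing x y
  · rw [abs_sub_comm, abs_sub_comm x]; exact this y x (le_of_not_ge hxy)
  have hcell : ∀ j ∈ range N, 0 ≤ cellClamp R N j y - cellClamp R N j x :=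
    fun j _ => sub_nonneg.2 (cellClamp_mono j hxy)
  have htotal : ∑ j ∈ range N, (cellClamp R N j y - cellClamp R N j x) ≤ y - x := by
    have hy := sum_cellClamp_sub_knot hR hN y N
    have hx := sum_cellClamp_sub_knot hR hN x N
    rw [sum_sub_distrib] at hx hy ⊢
    linarith [clamp_sub_clamp_le (knot R N 0) (knot R N N) hxy]
  rw [interp_eq_sum_slope f hR hN, interp_eq_sum_slope f hR hN, abs_sub_comm, abs_sub_comm x,
    abs_of_nonneg (sub_nonneg.2 hxy), add_sub_add_left_eq_sub, ← sum_sub_distrib]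
  calc |∑ j ∈ range N, (slope R N f j * (cellClamp R N j y - knot R N j)
          - slope R N f j * (cellClamp R N j x - knot R N j))|
      ≤ ∑ j ∈ range N, L * (cellClamp R N j y - cellClamp R N j x) := by
        refine (abs_sum_le_sum_abs _ _).trans (sum_le_sum fun j hj => ?_)
        rw [← mul_sub, sub_sub_sub_cancel_right, abs_mul, abs_of_nonneg (hcell j hj)]
        exact mul_le_mul_of_nonneg_right (abs_slope_le f hR hN hL hf j) (hcell j hj)
    _ ≤ L * (y - x) := by rw [← mul_sum]; exact mul_le_mul_of_nonneg_left htotal hL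

lemma cellClamp_knot_of_lt (hR : 0 < R) (hN : 0 < N) {i j : ℕ} (h : j < i) :
    cellClamp R N j (knot R N i) = knot R N (j + 1) := by
  rw [cellClamp, max_eq_left (knot_mono hR hN h.le), min_eq_right (knot_mono hR hN h)]

lemma cellClamp_knot_of_le (hR : 0 < R) (hN : 0 < N) {i j : ℕ} (h : i ≤ j) :
    cellClamp R N j (knot R N i) = knot R N j := by
  rw [cellClamp, max_eq_right (knot_mono hR hN h), min_eq_left (knot_mono hR hN j.le_succ)]

lemma interp_knot (f : ℝ → ℝ) (hR : 0 < R) (hN : 0 < N) {i : ℕ} (hi : i ≤ N) :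
    interp R N f (knot R N i) = f (knot R N i) := by
  have hstep : ∀ j ∈ range i, slope R N f j * (cellClamp R N j (knot R N i) - knot R N j)
      = f (knot R N (j + 1)) - f (knot R N j) := by
    intro j hj
    have hj := mem_range.1 hj
    rw [cellClamp_knot_of_lt hR hN hj, knot_succ, add_sub_cancel_left, ← knot_succ, slope,
      if_pos (hj.trans_le hi), div_mul_cancel₀ _ (mesh_pos hR hN).ne']
  rw [interp_eq_sum_slope f hR hN, ← sum_range_add_sum_Ico _ hi, sum_congr rfl hstep,
    sum_range_sub (fun j => f (knot R N j)), knot_zero,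
    sum_eq_zero fun j hj => by rw [cellClamp_knot_of_le hR hN (mem_Ico.1 hj).1, sub_self, mul_zero]]
  ring

lemma exists_knot_near (hR : 0 < R) (hN : 0 < N) {x : ℝ} (hx : |x| ≤ R) :
    ∃ j ≤ N, |x - knot R N j| ≤ 2 * R / N := by
  have hmesh := mesh_pos hR hN
  have hN' : (N : ℝ) ≠ 0 := by exact_mod_cast hN.ne'
  obtain ⟨hxl, hxr⟩ := abs_le.1 hx
  set t := (x + R) / (2 * R / N)
  have ht : 0 ≤ t := div_nonneg (by linarith) hmesh.le
  have hx_eq : x = -R + t * (2 * R / N) := by simp only [t]; field_simp; ring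
  refine ⟨⌊t⌋₊, Nat.floor_le_of_le ?_, ?_⟩
  · simp only [t]
    rw [div_le_iff₀ hmesh]
    field_simp
    linarith
  · rw [knot, hx_eq, add_sub_add_left_eq_sub, ← sub_mul, abs_mul, abs_of_pos hmesh,
      abs_of_nonneg (sub_nonneg.2 (Nat.floor_le ht))]
    exact mul_le_of_le_one_left hmesh.le (by linarith [Nat.lt_floor_add_one t])

lemma abs_interp_sub_le (f : ℝ → ℝ) {L : ℝ} (hR : 0 < R) (hN : 0 < N) (hL : 0 ≤ L)
    (hf : ∀ x y, |f x - f y| ≤ L * |x - y|) {x : ℝ} (hx : |x| ≤ R) :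
    |interp R N f x - f x| ≤ 2 * L * (2 * R / N) := by
  obtain ⟨j, hjN, hj⟩ := exists_knot_near hR hN hx
  have hnear : L * |x - knot R N j| ≤ L * (2 * R / N) := mul_le_mul_of_nonneg_left hj hL
  calc |interp R N f x - f x|
      ≤ |interp R N f x - interp R N f (knot R N j)| + |f (knot R N j) - f x| := by
        rw [← interp_knot f hR hN hjN]; exact abs_sub_le _ _ _
    _ ≤ L * |x - knot R N j| + L * |knot R N j - x| :=
        add_le_add (abs_interp_sub_interp_le f hR hN hL hf _ _) (hf _ _)
    _ ≤ 2 * L * (2 * R / N) := by rw [abs_sub_comm (knot R N j)]; linarith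

end PiecewiseLinear

namespace NN

variable (a : ℝ → ℝ) (ψ φ : NN)

lemma comp_l_of_lt {k : ℕ} (h : k < φ.depth) : (ψ.comp φ).l k = φ.l k := if_pos h

lemma comp_l_depth_add (k : ℕ) : (ψ.comp φ).l (φ.depth + k) = ψ.l (k + 1) := by
  simp only [comp]
  rw [if_neg (by omega)]
  congr 1
  omega

lemma comp_aff_of_lt {k : ℕ} (h : k < φ.Dm) : (ψ.comp φ).aff k = φ.aff k := by
  have : k < φ.depth := by rw [depth]; omega
  funext v i
  simp [aff, comp, h, this]

lemma comp_aff_Dm (v : ℕ → ℝ) : (ψ.comp φ).aff φ.Dm v = ψ.aff 0 (φ.aff φ.Dm v) := by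
  funext i
  simp only [aff, comp, depth, lt_irrefl, if_false, if_true, lt_add_one, mul_add,
    sum_add_distrib, mul_sum, sum_mul]
  rw [sum_comm]
  simp only [mul_assoc, add_assoc]

lemma comp_aff_add_succ (k : ℕ) : (ψ.comp φ).aff (φ.Dm + (k + 1)) = ψ.aff (k + 1) := by
  funext v i
  simp [aff, comp, depth]

lemma aff_trunc (k : ℕ) (y : ℕ → ℝ) : φ.aff k (trunc (φ.l k) y) = φ.aff k y := by
  funext i
  unfold aff
  congr 1
  exact sum_congr rfl fun j hj => by rw [trunc, if_pos (mem_range.1 hj)]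

lemma hidden_succ (k : ℕ) (z : ℕ → ℝ) :
    φ.hidden a (k + 1) z = fun i => a (φ.aff k (φ.hidden a k z) i) := rfl

lemma comp_hidden_of_le {k : ℕ} (h : k ≤ φ.Dm) (z : ℕ → ℝ) :
    (ψ.comp φ).hidden a k z = φ.hidden a k z := by
  induction k with
  | zero => rfl
  | succ k ih => rw [hidden_succ, hidden_succ, ih (by omega), comp_aff_of_lt ψ φ (by omega)]

lemma comp_hidden_add_succ (x : ℕ → ℝ) (k : ℕ) :
    (ψ.comp φ).hidden a (φ.Dm + (k + 1)) (trunc (φ.l 0) x)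
      = ψ.hidden a (k + 1) (trunc (ψ.l 0) (φ.fullReal a x)) := by
  induction k with
  | zero =>
    rw [hidden_succ, hidden_succ, comp_hidden_of_le a ψ φ le_rfl, comp_aff_Dm, ← aff_trunc ψ 0]
    rfl
  | succ k ih =>
    rw [← Nat.add_assoc, hidden_succ, hidden_succ, ih, comp_aff_add_succ]

lemma fullReal_comp (x : ℕ → ℝ) : (ψ.comp φ).fullReal a x = ψ.fullReal a (φ.fullReal a x) := by
  have hl0 : (ψ.comp φ).l 0 = φ.l 0 := comp_l_of_lt ψ φ (by simp [depth])
  change (ψ.comp φ).aff (φ.Dm + ψ.Dm) ((ψ.comp φ).hidden a (φ.Dm + ψ.Dm) (trunc ((ψ.comp φ).l 0) x))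
    = ψ.aff ψ.Dm (ψ.hidden a ψ.Dm (trunc (ψ.l 0) (φ.fullReal a x)))
  rw [hl0]
  cases hψ : ψ.Dm with
  | zero =>
    rw [Nat.add_zero, comp_hidden_of_le a ψ φ le_rfl, comp_aff_Dm]
    exact (aff_trunc ψ 0 _).symm
  | succ m => rw [comp_hidden_add_succ, comp_aff_add_succ]

def chain (blk : ℕ → NN) : ℕ → NN
  | 0 => blk 0
  | m + 1 => (blk (m + 1)).comp (chain blk m)

section Chain

variable (blk : ℕ → NN)

lemma fullReal_chain_succ (a : ℝ → ℝ) (m : ℕ) (x : ℕ → ℝ) :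
    (chain blk (m + 1)).fullReal a x = (blk (m + 1)).fullReal a ((chain blk m).fullReal a x) :=
  fullReal_comp a _ _ x

lemma chain_l_zero (m : ℕ) : (chain blk m).l 0 = (blk 0).l 0 := by
  induction m with
  | zero => rfl
  | succ m ih => rw [chain, comp_l_of_lt _ _ (by simp [depth]), ih]

variable {blk} (hblk : ∀ k, (blk k).Dm = 1)
include hblk

lemma chain_Dm (m : ℕ) : (chain blk m).Dm = m + 1 := by
  induction m with
  | zero => exact hblk 0
  | succ m ih => simp only [chain, comp, ih, hblk]

lemma chain_depth (m : ℕ) : (chain blk m).depth = m + 2 := by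
  rw [depth, chain_Dm hblk]

lemma chain_l_succ {m k : ℕ} (hk : k ≤ m) : (chain blk m).l (k + 1) = (blk k).l 1 := by
  induction m with
  | zero => rw [Nat.le_zero.1 hk]; rfl
  | succ m ih =>
    rcases hk.lt_or_eq with hk | rfl
    · rw [chain, comp_l_of_lt _ _ (by rw [chain_depth hblk]; omega), ih (by omega)]
    · rw [chain, ← chain_depth hblk m, ← Nat.add_zero (chain blk m).depth, comp_l_depth_add]

lemma chain_l_top (m : ℕ) : (chain blk m).l (m + 2) = (blk m).l 2 := by
  cases m with
  | zero => rfl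
  | succ m => rw [chain, show m + 1 + 2 = (chain blk m).depth + 1 by rw [chain_depth hblk],
      comp_l_depth_add]

end Chain

def twoLayer (n₀ n₁ n₂ : ℕ) (V₀ : ℕ → ℕ → ℝ) (b₀ : ℕ → ℝ) (V₁ : ℕ → ℕ → ℝ) (b₁ : ℕ → ℝ) : NN where
  Dm := 1
  l k := if k = 0 then n₀ else if k = 1 then n₁ else n₂
  V k := if k = 0 then V₀ else V₁
  b k := if k = 0 then b₀ else b₁

section TwoLayer

variable (n₀ n₁ n₂ : ℕ) (V₀ : ℕ → ℕ → ℝ) (b₀ : ℕ → ℝ) (V₁ : ℕ → ℕ → ℝ) (b₁ : ℕ → ℝ)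

lemma twoLayer_l_one : (twoLayer n₀ n₁ n₂ V₀ b₀ V₁ b₁).l 1 = n₁ := rfl

lemma fullReal_twoLayer (a : ℝ → ℝ) (x : ℕ → ℝ) (i : ℕ) :
    (twoLayer n₀ n₁ n₂ V₀ b₀ V₁ b₁).fullReal a x i
      = ∑ p ∈ range n₁, V₁ i p * a (∑ j ∈ range n₀, V₀ p j * trunc n₀ x j + b₀ p) + b₁ i := by
  simp [twoLayer, fullReal, hidden, aff]

end TwoLayer

end NN

def kron (i j : ℕ) : ℝ := if j = i then 1 else 0

lemma sum_kron_mul {n i : ℕ} (h : i < n) (F : ℕ → ℝ) : ∑ j ∈ range n, kron i j * F j = F i := by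
  simp [kron, h]

lemma sum_range_mul_eq_sum_sum (F : ℕ → ℝ) (a b : ℕ) :
    ∑ p ∈ range (a * b), F p = ∑ c ∈ range a, ∑ j ∈ range b, F (c * b + j) := by
  induction a with
  | zero => simp
  | succ a ih => rw [Nat.succ_mul, sum_range_add, ih, sum_range_succ]

lemma trunc_of_lt {n j : ℕ} (h : j < n) (u : ℕ → ℝ) : trunc n u j = u j := if_pos h

open PiecewiseLinear NN

section Blocks

variable (f : ℕ → ℝ → ℝ) (G : ℝ → ℝ) (r B : ℝ) (N D w : ℕ)

/-- Hidden neuron `c * (N + 1) + j` computes `ReLU (x_c - knot j)`. -/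
def inputBlock : NN :=
  twoLayer D (D * (N + 1)) D
    (fun p j => kron (p / (N + 1)) j)
    (fun p => -knot r N (p % (N + 1)))
    (fun i p => if p / (N + 1) = i then reluCoeff r N (f (i + 1)) (p % (N + 1)) else 0)
    (fun i => f (i + 1) (-r))

lemma fullReal_inputBlock (x : ℕ → ℝ) {i : ℕ} (hi : i < D) :
    (inputBlock f r N D).fullReal ReLU x i = interp r N (f (i + 1)) (trunc D x i) := by
  have hdiv : ∀ c, ∀ j < N + 1, (c * (N + 1) + j) / (N + 1) = c := fun c j hj => by
    rw [Nat.mul_comm, Nat.mul_add_div N.succ_pos, Nat.div_eq_of_lt hj, Nat.add_zero]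
  have hmod : ∀ c, ∀ j < N + 1, (c * (N + 1) + j) % (N + 1) = j := fun c j hj => by
    rw [Nat.mul_comm, Nat.mul_add_mod, Nat.mod_eq_of_lt hj]
  rw [inputBlock, fullReal_twoLayer, sum_range_mul_eq_sum_sum, interp, add_comm]
  congr 1
  rw [sum_eq_single_of_mem i (mem_range.2 hi)]
  · refine sum_congr rfl fun j hj => ?_
    have hj := mem_range.1 hj
    rw [hdiv i j hj, hmod i j hj, if_pos rfl, sum_kron_mul hi, sub_eq_add_neg]
  · intro c hc hci
    refine sum_eq_zero fun j hj => ?_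
    rw [hdiv c j (mem_range.1 hj), if_neg hci, zero_mul]

/-- On input `(S, y, c₁, …, c_{w-1})`, hidden neuron `0` computes `ReLU (y - S)` and neurons
`2k + 1, 2k + 2` compute `ReLU (± x_{src k})`. -/
def maxBlock : NN :=
  let src : ℕ → ℕ := fun k => if k = 0 then 0 else k + 1
  twoLayer (w + 1) (2 * w + 1) w
    (fun p j => if p = 0 then kron 1 j - kron 0 j
      else if p % 2 = 1 then kron (src (p / 2)) j else -kron (src (p / 2 - 1)) j)
    (fun _ => 0)
    (fun k p => (if k = 0 then kron 0 p else 0) + kron (2 * k + 1) p - kron (2 * k + 2) p)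
    (fun _ => 0)

lemma fullReal_maxBlock (v : ℕ → ℝ) {k : ℕ} (hk : k < w) :
    (maxBlock w).fullReal ReLU v k
      = if k = 0 then max (trunc (w + 1) v 0) (trunc (w + 1) v 1) else trunc (w + 1) v (k + 1) := by
  rw [maxBlock, fullReal_twoLayer]
  simp only [add_mul, sub_mul, sum_add_distrib, sum_sub_distrib, add_zero]
  rw [sum_kron_mul (show 2 * k + 1 < 2 * w + 1 by omega),
    sum_kron_mul (show 2 * k + 2 < 2 * w + 1 by omega)]
  simp only [show 2 * k + 1 ≠ 0 by omega, show 2 * k + 2 ≠ 0 by omega, if_false,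
    show (2 * k + 1) % 2 = 1 by omega, show (2 * k + 2) % 2 ≠ 1 by omega, if_true,
    show (2 * k + 1) / 2 = k by omega, show (2 * k + 2) / 2 - 1 = k by omega]
  rcases Nat.eq_zero_or_pos k with rfl | hk0
  · simp only [if_true, sum_kron_mul (show 0 < 2 * w + 1 by omega), sub_mul, neg_mul,
      sum_sub_distrib, sum_neg_distrib, sum_kron_mul (show 0 < w + 1 by omega),
      sum_kron_mul (show 1 < w + 1 by omega)]
    linarith [ReLU_sub_ReLU_neg (trunc (w + 1) v 0),
      add_ReLU_sub (trunc (w + 1) v 0) (trunc (w + 1) v 1)]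
  · simp only [hk0.ne', if_false, zero_mul, sum_const_zero, zero_add, neg_mul, sum_neg_distrib,
      sum_kron_mul (show k + 1 < w + 1 by omega), ReLU_sub_ReLU_neg]

/-- On input `(U, c₁, …, c_{w-1})`, hidden neuron `j ≤ N` computes `ReLU (U - knot j)` and
neurons `N + 2k - 1, N + 2k` compute `ReLU (± c_k)`. -/
def interpBlock : NN :=
  twoLayer w (N + 1 + 2 * (w - 1)) w
    (fun p j => if p ≤ N then kron 0 j
      else if (p - N) % 2 = 1 then kron ((p - N + 1) / 2) j else -kron ((p - N + 1) / 2) j)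
    (fun p => if p ≤ N then -knot B N p else 0)
    (fun k p => if k = 0 then (if p ≤ N then reluCoeff B N G p else 0)
      else kron (N + 2 * k - 1) p - kron (N + 2 * k) p)
    (fun k => if k = 0 then G (-B) else 0)

lemma fullReal_interpBlock (v : ℕ → ℝ) {k : ℕ} (hk : k < w) :
    (interpBlock G B N w).fullReal ReLU v k
      = if k = 0 then interp B N G (trunc w v 0) else trunc w v k := by
  rw [interpBlock, fullReal_twoLayer]
  rcases Nat.eq_zero_or_pos k with rfl | hk0
  · have htail : ∀ q, ¬ N + 1 + q ≤ N := by omega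
    rw [Finset.sum_range_add]
    simp only [if_true, htail, if_false, zero_mul, sum_const_zero, add_zero]
    rw [interp, add_comm]
    congr 1
    refine sum_congr rfl fun p hp => ?_
    have hp : p ≤ N := Nat.lt_succ_iff.1 (mem_range.1 hp)
    simp only [hp, if_true, sum_kron_mul (show 0 < w by omega), sub_eq_add_neg]
  · simp only [hk0.ne', if_false, add_zero, sub_mul, sum_sub_distrib,
      sum_kron_mul (show N + 2 * k - 1 < N + 1 + 2 * (w - 1) by omega),
      sum_kron_mul (show N + 2 * k < N + 1 + 2 * (w - 1) by omega),
      if_neg (show ¬ N + 2 * k - 1 ≤ N by omega), if_neg (show ¬ N + 2 * k ≤ N by omega),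
      if_pos (show (N + 2 * k - 1 - N) % 2 = 1 by omega),
      if_neg (show (N + 2 * k - N) % 2 ≠ 1 by omega),
      show (N + 2 * k - 1 - N + 1) / 2 = k by omega, show (N + 2 * k - N + 1) / 2 = k by omega,
      neg_mul, sum_neg_distrib, sum_kron_mul hk, ReLU_sub_ReLU_neg]

end Blocks

/-- `hrec` with every `f i` interpolated on `[-r, r]` and every `g i` on `[-B, B]`. -/
def hrecInterp (f g : ℕ → ℝ → ℝ) (r B : ℝ) (N : ℕ) : ℕ → (ℕ → ℝ) → ℝ
  | 0 => fun v => interp r N (f 1) (v 0)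
  | i + 1 => fun v =>
      interp B N (g (i + 2)) (max (hrecInterp f g r B N i v) (interp r N (f (i + 2)) (v (i + 1))))

section Network

variable (f g : ℕ → ℝ → ℝ) (r B : ℝ) (N D d : ℕ)

/-- Block `0` interpolates every `f (c + 1)` at `x_c`; blocks `2i + 1` and `2i + 2` take the
maximum with the next interpolated coordinate and then interpolate `g (i + 2)`. -/
def blocks (m : ℕ) : NN :=
  if m = 0 then inputBlock f r N D
  else if m % 2 = 1 then maxBlock (D - (m + 1) / 2)
  else interpBlock (g (m / 2 + 1)) B N (D - m / 2)

lemma blocks_zero : blocks f g r B N D 0 = inputBlock f r N D := if_pos rfl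

lemma blocks_odd (i : ℕ) : blocks f g r B N D (2 * i + 1) = maxBlock (D - (i + 1)) := by
  rw [blocks, if_neg (by omega), if_pos (by omega), show (2 * i + 1 + 1) / 2 = i + 1 by omega]

lemma blocks_even (i : ℕ) :
    blocks f g r B N D (2 * i + 2) = interpBlock (g (i + 2)) B N (D - (i + 1)) := by
  rw [blocks, if_neg (by omega), if_neg (by omega), show (2 * i + 2) / 2 = i + 1 by omega]

lemma blocks_Dm (m : ℕ) : (blocks f g r B N D m).Dm = 1 := by
  unfold blocks
  split_ifs <;> rfl

lemma fullReal_chain_blocks (v : ℕ → ℝ) {i k : ℕ} (h : i + k < D) :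
    (chain (blocks f g r B N D) (2 * i)).fullReal ReLU v k
      = if k = 0 then hrecInterp f g r B N i (trunc D v)
        else interp r N (f (i + k + 1)) (trunc D v (i + k)) := by
  induction i generalizing k with
  | zero =>
    rw [Nat.mul_zero, chain, blocks_zero, fullReal_inputBlock f r N D v (by omega)]
    rcases Nat.eq_zero_or_pos k with rfl | hk0
    · rfl
    · rw [if_neg hk0.ne', Nat.zero_add]
  | succ i ih =>
    have hw : k < D - (i + 1) := by omega
    rw [show 2 * (i + 1) = 2 * i + 1 + 1 by ring, fullReal_chain_succ, fullReal_chain_succ,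
      blocks_even, blocks_odd, fullReal_interpBlock _ _ _ _ _ hw]
    rcases Nat.eq_zero_or_pos k with rfl | hk0
    · rw [if_pos rfl, if_pos rfl, trunc_of_lt hw, fullReal_maxBlock _ _ hw, if_pos rfl,
        trunc_of_lt (by omega), trunc_of_lt (by omega), ih (k := 0) (by omega),
        ih (k := 1) (by omega), if_pos rfl, if_neg one_ne_zero]
      rfl
    · rw [if_neg hk0.ne', if_neg hk0.ne', trunc_of_lt hw, fullReal_maxBlock _ _ hw, if_neg hk0.ne',
        trunc_of_lt (by omega), ih (k := k + 1) (by omega), if_neg (by omega),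
        show i + (k + 1) = i + 1 + k by ring]

def net : NN := chain (blocks f g r B N (d + 1)) (2 * d)

lemma net_depth : (net f g r B N d).depth = 2 * d + 2 := chain_depth (blocks_Dm f g r B N _) _

lemma net_l_zero : (net f g r B N d).l 0 = d + 1 := by
  rw [net, chain_l_zero, blocks_zero]
  rfl

lemma net_l_depth : (net f g r B N d).l (net f g r B N d).depth = 1 := by
  rw [net_depth, net, chain_l_top (blocks_Dm f g r B N _)]
  rcases d with _ | d
  · rw [blocks_zero]; rfl
  · rw [show 2 * (d + 1) = 2 * d + 2 by ring, blocks_even]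
    exact show d + 1 + 1 - (d + 1) = 1 by omega

lemma fullReal_net (v : ℕ → ℝ) :
    (net f g r B N d).fullReal ReLU v 0 = hrecInterp f g r B N d (trunc (d + 1) v) := by
  rw [net, fullReal_chain_blocks _ _ _ _ _ _ v (k := 0) (by omega), if_pos rfl]

/-- Odd layers are hidden layers of the input and interpolation blocks, even layers those of the
max blocks (or the input/output layer). -/
lemma net_l_le (hN : 1 ≤ N) {k : ℕ} (hk : k ≤ 2 * d + 2) :
    (net f g r B N d).l k ≤ if k % 2 = 0 then 2 * d + 3 else (d + 1) * (N + 1) := by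
  rcases Nat.even_or_odd' k with ⟨j, rfl | rfl⟩
  · rw [if_pos (by omega)]
    rcases j with _ | j
    · rw [net_l_zero]; omega
    rcases (show j < d ∨ j = d by omega) with hj | rfl
    · rw [net, show 2 * (j + 1) = 2 * j + 1 + 1 by ring,
        chain_l_succ (blocks_Dm f g r B N _) (by omega), blocks_odd]
      simp only [maxBlock, twoLayer_l_one]
      omega
    · rw [show 2 * (j + 1) = 2 * j + 2 by ring, ← net_depth f g r B N j, net_l_depth]; omega
  · rw [if_neg (by omega), net, chain_l_succ (blocks_Dm f g r B N _) (by omega)]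
    rcases j with _ | j
    · rw [blocks_zero]; rfl
    · rw [show 2 * (j + 1) = 2 * j + 2 by ring, blocks_even]
      simp only [interpBlock, twoLayer_l_one]
      have := Nat.mul_le_mul_left d (show 2 ≤ N + 1 by omega)
      rw [Nat.add_mul, Nat.one_mul]
      omega

lemma P_net_le (hN : 2 ≤ N) : (net f g r B N d).P ≤ 16 * (d + 1) ^ 3 * N := by
  have hterm : ∀ k ∈ range (2 * d + 2), (net f g r B N d).l (k + 1) * ((net f g r B N d).l k + 1)
      ≤ (2 * d + 4) * ((d + 1) * (N + 1) + 1) := by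
    intro k hk
    have hk := mem_range.1 hk
    have h0 := net_l_le f g r B N d (by omega) (show k ≤ 2 * d + 2 by omega)
    have h1 := net_l_le f g r B N d (by omega) (show k + 1 ≤ 2 * d + 2 by omega)
    rcases Nat.even_or_odd' k with ⟨j, rfl | rfl⟩
    · rw [if_pos (by omega)] at h0
      rw [if_neg (by omega)] at h1
      calc _ ≤ (d + 1) * (N + 1) * (2 * d + 4) := Nat.mul_le_mul h1 (by omega)
        _ ≤ _ := by nlinarith
    · rw [if_neg (by omega)] at h0
      rw [if_pos (by omega)] at h1
      calc _ ≤ (2 * d + 3) * ((d + 1) * (N + 1) + 1) := Nat.mul_le_mul h1 (by omega)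
        _ ≤ _ := by nlinarith
  calc (net f g r B N d).P ≤ (2 * d + 2) * ((2 * d + 4) * ((d + 1) * (N + 1) + 1)) := by
        rw [P, net_depth]
        simpa using sum_le_sum hterm
    _ ≤ (2 * (d + 1)) * ((4 * (d + 1)) * (2 * (d + 1) * N)) := by
        have : (d + 1) * (N + 1) + 1 ≤ 2 * (d + 1) * N := by nlinarith
        gcongr <;> omega
    _ = 16 * (d + 1) ^ 3 * N := by ring

end Network

def prefixVec (i : ℕ) (v : ℕ → ℝ) : EuclideanSpace ℝ (Fin (i + 1)) := WithLp.toLp 2 fun c => v c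

lemma hrec_succ_prefixVec (f g : ℕ → ℝ → ℝ) (i : ℕ) (v : ℕ → ℝ) :
    hrec f g (i + 1) (prefixVec (i + 1) v)
      = g (i + 2) (max (hrec f g i (prefixVec i v)) (f (i + 2) (v (i + 1)))) := rfl

lemma abs_le_two_mul_mul_of_lipschitz {F : ℝ → ℝ} {K r : ℝ} (hK : 0 ≤ K) (hr : 1 ≤ r)
    (hF : ∀ x y, |F x - F y| ≤ K * |x - y|) (hF0 : |F 0| ≤ K) {x : ℝ} (hx : |x| ≤ r) :
    |F x| ≤ 2 * K * r := by
  have h := hF x 0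
  rw [sub_zero] at h
  have : K * |x| ≤ K * r := mul_le_mul_of_nonneg_left hx hK
  have : K ≤ K * r := le_mul_of_one_le_right hK hr
  linarith [abs_sub_abs_le_abs_sub (F x) (F 0)]

section Analysis

variable {f g : ℕ → ℝ → ℝ} {K r B : ℝ} {N : ℕ}

lemma abs_hrec_le (hK : 0 ≤ K) (hr : 1 ≤ r)
    (hfLip : ∀ i x y, |f i x - f i y| ≤ K * |x - y|) (hf0 : ∀ i, |f i 0| ≤ K)
    (hgLip : ∀ i x y, |g i x - g i y| ≤ |x - y|) (hg0 : ∀ i, g i 0 = 0) (i : ℕ)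
    {v : ℕ → ℝ} (hv : ∀ c, |v c| ≤ r) : |hrec f g i (prefixVec i v)| ≤ 2 * K * r := by
  induction i with
  | zero => exact abs_le_two_mul_mul_of_lipschitz hK hr (hfLip 1) (hf0 1) (hv 0)
  | succ i ih =>
    rw [hrec_succ_prefixVec]
    have hg := hgLip (i + 2) (max (hrec f g i (prefixVec i v)) (f (i + 2) (v (i + 1)))) 0
    rw [hg0, sub_zero, sub_zero] at hg
    exact hg.trans (abs_max_le_max_abs_abs.trans (max_le ih
      (abs_le_two_mul_mul_of_lipschitz hK hr (hfLip _) (hf0 _) (hv _))))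

lemma abs_hrecInterp_sub_hrecInterp_le (hK : 0 ≤ K) (hr : 0 < r) (hB : 0 < B) (hN : 0 < N)
    (hfLip : ∀ i x y, |f i x - f i y| ≤ K * |x - y|) (hgLip : ∀ i x y, |g i x - g i y| ≤ |x - y|)
    {v w : ℕ → ℝ} {M : ℝ} (hvw : ∀ c, |v c - w c| ≤ M) (i : ℕ) :
    |hrecInterp f g r B N i v - hrecInterp f g r B N i w| ≤ K * M := by
  have hinterp_f : ∀ j c, |interp r N (f j) (v c) - interp r N (f j) (w c)| ≤ K * M := fun j c =>
    (abs_interp_sub_interp_le _ hr hN hK (hfLip j) _ _).trans (mul_le_mul_of_nonneg_left (hvw c) hK)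
  induction i with
  | zero => exact hinterp_f 1 0
  | succ i ih =>
    have hg : ∀ x y, |g (i + 2) x - g (i + 2) y| ≤ 1 * |x - y| := by simpa using hgLip (i + 2)
    refine (abs_interp_sub_interp_le _ hB hN zero_le_one hg _ _).trans ?_
    rw [one_mul]
    exact (abs_max_sub_max_le_max _ _ _ _).trans (max_le ih (hinterp_f _ _))

/-- As long as the accumulated error stays below `1`, all arguments of the interpolated `g`'s
lie in `[-B, B]`, where their interpolants are accurate. -/
lemma abs_hrecInterp_sub_hrec_le (hK : 0 ≤ K) (hr : 1 ≤ r) (hN : 0 < N) (hB : 2 * K * r + 1 ≤ B)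
    (hfLip : ∀ i x y, |f i x - f i y| ≤ K * |x - y|) (hf0 : ∀ i, |f i 0| ≤ K)
    (hgLip : ∀ i x y, |g i x - g i y| ≤ |x - y|) (hg0 : ∀ i, g i 0 = 0)
    {v : ℕ → ℝ} (hv : ∀ c, |v c| ≤ r) (i : ℕ)
    (hsmall : 2 * K * (2 * r / N) + i * (2 * (2 * B / N)) ≤ 1) :
    |hrecInterp f g r B N i v - hrec f g i (prefixVec i v)|
      ≤ 2 * K * (2 * r / N) + i * (2 * (2 * B / N)) := by
  have hr0 : 0 < r := by linarith
  have hB0 : 0 < B := by nlinarith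
  have hβ : 0 ≤ 2 * (2 * B / N) := by positivity
  have hferr : ∀ j c, |interp r N (f j) (v c) - f j (v c)| ≤ 2 * K * (2 * r / N) :=
    fun j c => abs_interp_sub_le _ hr0 hN hK (hfLip j) (hv c)
  induction i with
  | zero =>
    rw [Nat.cast_zero, zero_mul, add_zero]
    exact hferr 1 0
  | succ i ih =>
    push_cast at hsmall ⊢
    have hprev := ih (by nlinarith)
    have hH := abs_hrec_le hK hr hfLip hf0 hgLip hg0 i hv
    have hF := abs_le_two_mul_mul_of_lipschitz hK hr (hfLip (i + 2)) (hf0 _) (hv (i + 1))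
    have hYF := hferr (i + 2) (i + 1)
    set A := hrecInterp f g r B N i v
    set H := hrec f g i (prefixVec i v)
    set Y := interp r N (f (i + 2)) (v (i + 1))
    set F := f (i + 2) (v (i + 1))
    have hU : |max A Y| ≤ B := abs_max_le_max_abs_abs.trans (max_le
      (by linarith [abs_sub_abs_le_abs_sub A H])
      (by nlinarith [abs_sub_abs_le_abs_sub Y F, mul_nonneg (i + 1 : ℕ).cast_nonneg hβ]))
    have hUU : |max A Y - max H F| ≤ 2 * K * (2 * r / N) + i * (2 * (2 * B / N)) :=
      (abs_max_sub_max_le_max _ _ _ _).trans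
        (max_le hprev (by linarith [mul_nonneg i.cast_nonneg hβ]))
    have hg1 : ∀ x y, |g (i + 2) x - g (i + 2) y| ≤ 1 * |x - y| := by simpa using hgLip (i + 2)
    have hgerr := abs_interp_sub_le (g (i + 2)) hB0 hN zero_le_one hg1 hU
    have hgUU := hgLip (i + 2) (max A Y) (max H F)
    change |interp B N (g (i + 2)) (max A Y) - hrec f g (i + 1) (prefixVec (i + 1) v)| ≤ _
    rw [hrec_succ_prefixVec]
    calc _ ≤ |interp B N (g (i + 2)) (max A Y) - g (i + 2) (max A Y)|
          + |g (i + 2) (max A Y) - g (i + 2) (max H F)| := abs_sub_le _ _ _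
      _ ≤ _ := by linarith

end Analysis

lemma trunc_emb (n : ℕ) (x : EuclideanSpace ℝ (Fin n)) : trunc n (emb n x) = emb n x := by
  funext j
  by_cases h : j < n <;> simp [trunc, emb, h]

lemma prefixVec_emb (d : ℕ) (x : EuclideanSpace ℝ (Fin (d + 1))) :
    prefixVec d (emb (d + 1) x) = x := by
  ext c
  simp [prefixVec, emb, c.is_le]

lemma abs_emb_le {n : ℕ} {x : EuclideanSpace ℝ (Fin n)} {r : ℝ} (hr : 0 ≤ r) (hx : ∀ i, |x i| ≤ r)
    (j : ℕ) : |emb n x j| ≤ r := by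
  unfold emb
  split_ifs
  · exact hx _
  · simpa using hr

lemma abs_emb_sub_emb_le {n : ℕ} (x y : EuclideanSpace ℝ (Fin n)) (j : ℕ) :
    |emb n x j - emb n y j| ≤ ‖x - y‖ := by
  unfold emb
  split_ifs with h
  · exact (Real.norm_eq_abs _).symm.trans_le (PiLp.norm_apply_le (x - y) ⟨j, h⟩)
  · simp

lemma exists_cell_count {c ε : ℝ} (hc : 1 ≤ c) (hε : 0 < ε) (hε1 : ε ≤ 1) :
    ∃ N : ℕ, 2 ≤ N ∧ 16 * c ≤ ε * N ∧ ε * N ≤ 17 * c := by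
  have hlow : 16 * c / ε ≤ ⌈16 * c / ε⌉₊ := Nat.le_ceil _
  have hhigh := mul_lt_mul_of_pos_left (Nat.ceil_lt_add_one (by positivity : 0 ≤ 16 * c / ε)) hε
  have h16 : 16 ≤ 16 * c / ε := by rw [le_div_iff₀ hε]; nlinarith
  rw [mul_add, mul_div_cancel₀ _ hε.ne'] at hhigh
  refine ⟨⌈16 * c / ε⌉₊, ?_, (div_le_iff₀' hε).1 hlow, by linarith⟩
  exact_mod_cast (show (2 : ℝ) ≤ ⌈16 * c / ε⌉₊ by linarith)

lemma error_budget_le {K r ε : ℝ} {N d : ℕ} (hKr : 1 ≤ K * r) (hN0 : 0 < N)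
    (hN : 16 * (K * r * (d + 1)) ≤ ε * N) :
    2 * K * (2 * r / N) + d * (2 * (2 * (2 * K * r + 1) / N)) ≤ ε := by
  have hN' : (0 : ℝ) < N := by exact_mod_cast hN0
  have hd : (0 : ℝ) ≤ d := d.cast_nonneg
  rw [show 2 * K * (2 * r / N) + d * (2 * (2 * (2 * K * r + 1) / N))
      = (4 * (K * r) + d * (8 * (K * r) + 4)) / N by field_simp; ring, div_le_iff₀ hN']
  nlinarith

lemma param_count_le {K r ε : ℝ} {N d : ℕ} (hK : 1 ≤ K) (hr : 0 ≤ r) (hε : 0 < ε)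
    (hN : ε * N ≤ 17 * (K * r * (d + 1))) :
    16 * ((d : ℝ) + 1) ^ 3 * N
      ≤ (3 / 7) * 10 ^ 4 * K ^ 3 * r * ((d : ℝ) + 1) ^ ((13 : ℝ) / 2) * ε⁻¹ := by
  set D : ℝ := d + 1
  have hD : 1 ≤ D := le_add_of_nonneg_left d.cast_nonneg
  have hpow : D ^ 4 ≤ D ^ ((13 : ℝ) / 2) := by
    rw [← Real.rpow_natCast]
    exact Real.rpow_le_rpow_of_exponent_le hD (by norm_num)
  have hK3 : K ≤ K ^ 3 := le_self_pow₀ hK (by norm_num)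
  have hNle : (N : ℝ) ≤ 17 * (K * r * D) * ε⁻¹ := by
    rw [← div_eq_mul_inv, le_div_iff₀ hε]; linarith
  calc 16 * D ^ 3 * N ≤ 16 * D ^ 3 * (17 * (K * r * D) * ε⁻¹) := by gcongr
    _ = 272 * K * r * D ^ 4 * ε⁻¹ := by ring
    _ ≤ (3 / 7) * 10 ^ 4 * K ^ 3 * r * D ^ ((13 : ℝ) / 2) * ε⁻¹ := by
        gcongr
        norm_num

/-- Proposition 7.3: recursive maxima of one-dimensional Lipschitz functions
can be approximated by ReLU networks without the curse of dimensionality. -/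
theorem recursive_max_approximation (K r : ℝ) (hK : 1 ≤ K) (hr : 1 ≤ r)
    (f g : ℕ → ℝ → ℝ)
    (hfLip : ∀ i : ℕ, ∀ x y : ℝ, |f i x - f i y| ≤ K * |x - y|)
    (hf0 : ∀ i : ℕ, |f i 0| ≤ K)
    (hgLip : ∀ i : ℕ, ∀ x y : ℝ, |g i x - g i y| ≤ |x - y|)
    (hg0 : ∀ i : ℕ, g i 0 = 0) :
    ∀ d : ℕ, ∀ ε : ℝ, 0 < ε → ε ≤ 1 →
      ∃ φ : NN, φ.l 0 = d + 1 ∧ φ.l φ.depth = 1 ∧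
        (∀ x : EuclideanSpace ℝ (Fin (d + 1)), (∀ i, |x i| ≤ r) →
          |hrec f g d x - φ.realScalar ReLU (d + 1) x| ≤ ε) ∧
        (∀ x y : EuclideanSpace ℝ (Fin (d + 1)),
          |φ.realScalar ReLU (d + 1) x - φ.realScalar ReLU (d + 1) y| ≤ K * ‖x - y‖) ∧
        ((φ.P : ℝ) ≤ (3 / 7) * 10 ^ 4 * K ^ 3 * r *
            ((d : ℝ) + 1) ^ ((13 : ℝ) / 2) * ε⁻¹) := by
  intro d ε hε hε1
  have hK0 : 0 ≤ K := by linarith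
  have hKr : 1 ≤ K * r := by nlinarith
  obtain ⟨N, hN2, hNlow, hNhigh⟩ :=
    exists_cell_count (by nlinarith [d.cast_nonneg (α := ℝ)] : 1 ≤ K * r * (d + 1)) hε hε1
  have hbudget := error_budget_le (d := d) hKr (by omega) hNlow
  refine ⟨net f g r (2 * K * r + 1) N d, net_l_zero .., net_l_depth .., fun x hx => ?_,
    fun x y => ?_, ?_⟩
  · rw [realScalar, fullReal_net, trunc_emb, abs_sub_comm]
    have h := abs_hrecInterp_sub_hrec_le hK0 hr (show 0 < N by omega) le_rfl hfLip hf0 hgLip hg0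
      (abs_emb_le (by linarith) hx) d (by linarith)
    rw [prefixVec_emb] at h
    exact h.trans hbudget
  · rw [realScalar, realScalar, fullReal_net, fullReal_net, trunc_emb, trunc_emb]
    exact abs_hrecInterp_sub_hrecInterp_le hK0 (by linarith) (by positivity) (by omega) hfLip hgLip
      (abs_emb_sub_emb_le x y) d
  · calc (_ : ℝ) ≤ 16 * ((d : ℝ) + 1) ^ 3 * N := by exact_mod_cast P_net_le f g r _ N d hN2
      _ ≤ _ := param_count_le hK (by linarith) hε hNhigh
end
end

section
/- Let r ∈ [1,∞) and define f_d : ℝ^d → ℝ by f_d(x) = Π_{i=1}^d x_i. Then for every integer d ≥ 2 and every ε ∈ (0, min{1/2, r^{−1}}] there exists a skeleton φ with ReLU-realization R_ReLU(φ) : ℝ^d → ℝ such that: 1) sup_{x∈[−r,r]^d} |f_d(x) − R_ReLU(φ)(x)| ≤ ε; 2) R_ReLU(φ) is 8^{(d−1)/2}·r^{d(d−1)}-Lipschitz on ℝ^d; 3) P(φ) ≤ (1/3)·10⁵·log₂(d)·d⁶·log₂(ε^{−1}) if r = 1; and 4) P(φ) ≤ (2/5)·10⁵·log₂(r)·log₂(d)·d⁸·log₂(ε^{−1})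 if r ≥ 2. -/
open scoped BigOperators ENNReal

noncomputable section

/-!
For the tent map `g`, `t² = t - ∑_{i ≥ 1} g^[i] t / 4^i` on `[0, 1]`; truncating after `m` terms
gives a 2-Lipschitz approximation of the square with error at most `1 / (4 · 4^m)`, computed by
`m` ReLU layers of width 4 (Yarotsky). The polarization identity turns it into an approximate
multiplication with error `c² / (16 · 4^m)` and Lipschitz constant `c` for `|a| + |b| ≤ c`.
The product `x_1 ⋯ x_d` is obtained by `d - 1` such multiplications, each partial product being
clamped to its a-priori range `[-r^(s+1), r^(s+1)]`: per step the error is multiplied by `r` and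
increased by at most `r^(3(s+1)) / (4 · 4^m)`, and the Lipschitz constant is multiplied by
`r^(s+1) + r ≤ 2 r^(s+1)`. The inputs are carried along as `ReLU (± x_j)`, so all hidden layers
have width `2d + 10`. Choosing `4^m ≥ d r^(3d) / ε` gives accuracy `ε` with depth `O(d m)`, hence
`O(d³ m)` parameters where `m = O(log d + d log r + log ε⁻¹)`.
-/

namespace ProductApprox

open Finset

lemma relu_nonneg (x : ℝ) : 0 ≤ ReLU x := le_max_right _ _

lemma relu_of_nonneg {x : ℝ} (h : 0 ≤ x) : ReLU x = x := max_eq_left h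

lemma relu_of_nonpos {x : ℝ} (h : x ≤ 0) : ReLU x = 0 := max_eq_right h

@[simp] lemma relu_zero : ReLU 0 = 0 := relu_of_nonpos le_rfl

@[simp] lemma relu_relu (x : ℝ) : ReLU (ReLU x) = ReLU x := relu_of_nonneg (relu_nonneg x)

@[simp] lemma relu_abs (x : ℝ) : ReLU |x| = |x| := relu_of_nonneg (abs_nonneg x)

@[simp] lemma relu_sub_relu_neg (x : ℝ) : ReLU x - ReLU (-x) = x := max_zero_sub_eq_self x

@[simp] lemma relu_add_relu_neg (x : ℝ) : ReLU x + ReLU (-x) = |x| :=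
  max_zero_add_max_neg_zero_eq_abs_self x

lemma abs_relu_sub_relu_le (x y : ℝ) : |ReLU x - ReLU y| ≤ |x - y| :=
  abs_max_sub_max_le_abs x y 0

/-! ### Yarotsky's approximation of the square -/

def tent (x : ℝ) : ℝ := 2 * ReLU x - 4 * ReLU (x - 1 / 2) + 2 * ReLU (x - 1)

lemma tent_eq_two_mul_min (x : ℝ) : tent x = 2 * min (ReLU x) (ReLU (1 - x)) := by
  unfold tent ReLU
  rcases le_total x 0 with h₀ | h₀ <;> rcases le_total x (1 / 2) with h₁ | h₁ <;>
    rcases le_total x 1 with h₂ | h₂ <;>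
    simp only [max_def, min_def] <;> split_ifs <;> linarith

lemma tent_nonneg (x : ℝ) : 0 ≤ tent x := by
  rw [tent_eq_two_mul_min]
  have := le_min (relu_nonneg x) (relu_nonneg (1 - x))
  linarith

lemma tent_le_one (x : ℝ) : tent x ≤ 1 := by
  rw [tent_eq_two_mul_min]
  rcases le_total x (1 / 2) with h | h
  · have : ReLU x ≤ 1 / 2 := max_le (by linarith) (by norm_num)
    linarith [min_le_left (ReLU x) (ReLU (1 - x))]
  · have : ReLU (1 - x) ≤ 1 / 2 := max_le (by linarith) (by norm_num)
    linarith [min_le_right (ReLU x) (ReLU (1 - x))]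

lemma tent_of_one_le {x : ℝ} (h : 1 ≤ x) : tent x = 0 := by
  rw [tent_eq_two_mul_min, relu_of_nonpos (by linarith : 1 - x ≤ 0), min_eq_right (relu_nonneg x),
    mul_zero]

lemma abs_tent_sub_tent_le (a b : ℝ) : |tent a - tent b| ≤ 2 * |a - b| := by
  rw [tent_eq_two_mul_min, tent_eq_two_mul_min, ← mul_sub, abs_mul, abs_two]
  have h₁ := abs_relu_sub_relu_le (1 - a) (1 - b)
  rw [show 1 - a - (1 - b) = -(a - b) by ring, abs_neg] at h₁
  have := (abs_min_sub_min_le_max _ _ _ _).trans (max_le (abs_relu_sub_relu_le a b) h₁)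
  linarith

lemma sub_sq_eq_tent {x : ℝ} (h₀ : 0 ≤ x) (h₁ : x ≤ 1) :
    x - x ^ 2 = tent x / 4 + (tent x - tent x ^ 2) / 4 := by
  unfold tent
  rcases le_total x (1 / 2) with h | h
  · rw [relu_of_nonneg h₀, relu_of_nonpos (by linarith : x - 1 / 2 ≤ 0),
      relu_of_nonpos (by linarith : x - 1 ≤ 0)]
    ring
  · rw [relu_of_nonneg h₀, relu_of_nonneg (by linarith : 0 ≤ x - 1 / 2),
      relu_of_nonpos (by linarith : x - 1 ≤ 0)]
    ring

lemma iterate_tent_mem_Icc {x : ℝ} (h₀ : 0 ≤ x) (h₁ : x ≤ 1) :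
    ∀ k : ℕ, tent^[k] x ∈ Set.Icc 0 1
  | 0 => ⟨h₀, h₁⟩
  | k + 1 => by
    rw [Function.iterate_succ_apply']
    exact ⟨tent_nonneg _, tent_le_one _⟩

lemma abs_iterate_tent_sub_le (k : ℕ) (a b : ℝ) :
    |tent^[k] a - tent^[k] b| ≤ 2 ^ k * |a - b| := by
  induction k with
  | zero => simp
  | succ k ih =>
    rw [Function.iterate_succ_apply', Function.iterate_succ_apply', pow_succ']
    calc |tent (tent^[k] a) - tent (tent^[k] b)| ≤ 2 * |tent^[k] a - tent^[k] b| :=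
          abs_tent_sub_tent_le _ _
      _ ≤ 2 * (2 ^ k * |a - b|) := by gcongr
      _ = _ := by ring

def sawtooth (m : ℕ) (t : ℝ) : ℝ := ∑ i ∈ range m, tent^[i + 1] t / 4 ^ (i + 1)

def sqApprox (m : ℕ) (t : ℝ) : ℝ := t - sawtooth m t

@[simp] lemma sqApprox_zero (t : ℝ) : sqApprox 0 t = t := by simp [sqApprox, sawtooth]

lemma sqApprox_succ (m : ℕ) (t : ℝ) :
    sqApprox (m + 1) t = sqApprox m t - tent^[m + 1] t / 4 ^ (m + 1) := by
  rw [sqApprox, sqApprox, sawtooth, sawtooth, sum_range_succ]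
  ring

lemma sqApprox_sub_sq {t : ℝ} (h₀ : 0 ≤ t) (h₁ : t ≤ 1) (m : ℕ) :
    sqApprox m t - t ^ 2 = (tent^[m] t - (tent^[m] t) ^ 2) / 4 ^ m := by
  induction m with
  | zero => simp
  | succ m ih =>
    obtain ⟨hy₀, hy₁⟩ := iterate_tent_mem_Icc h₀ h₁ m
    rw [sqApprox_succ, Function.iterate_succ_apply']
    linear_combination ih + sub_sq_eq_tent hy₀ hy₁ / (4 : ℝ) ^ m

lemma sqApprox_sub_sq_mem_Icc {t : ℝ} (h₀ : 0 ≤ t) (h₁ : t ≤ 1) (m : ℕ) :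
    sqApprox m t - t ^ 2 ∈ Set.Icc 0 (1 / (4 * 4 ^ m)) := by
  obtain ⟨hy₀, hy₁⟩ := iterate_tent_mem_Icc h₀ h₁ m
  rw [sqApprox_sub_sq h₀ h₁, one_div, mul_inv, ← one_div, ← div_eq_mul_inv]
  constructor
  · exact div_nonneg (by nlinarith) (by positivity)
  · gcongr
    nlinarith [sq_nonneg (tent^[m] t - 1 / 2)]

lemma sqApprox_nonneg {t : ℝ} (h₀ : 0 ≤ t) (m : ℕ) : 0 ≤ sqApprox m t := by
  rcases le_total t 1 with h₁ | h₁
  · nlinarith [(sqApprox_sub_sq_mem_Icc h₀ h₁ m).1]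
  · have hz : ∀ i : ℕ, tent^[i + 1] t = 0 := fun i => by
      rw [Function.iterate_succ_apply, tent_of_one_le h₁]
      exact Function.iterate_fixed (by norm_num [tent, ReLU]) i
    simp [sqApprox, sawtooth, hz, h₀]

lemma abs_sawtooth_sub_le (m : ℕ) (a b : ℝ) : |sawtooth m a - sawtooth m b| ≤ |a - b| := by
  have hterm : ∀ i ∈ range m, |tent^[i + 1] a / 4 ^ (i + 1) - tent^[i + 1] b / 4 ^ (i + 1)| ≤
      (1 / 2) ^ (i + 1) * |a - b| := fun i _ => by
    rw [← sub_div, abs_div, abs_of_pos (by positivity : (0 : ℝ) < 4 ^ (i + 1)),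
      div_le_iff₀ (by positivity), mul_right_comm, ← mul_pow]
    norm_num only [one_div_mul_eq_div, one_mul]
    exact abs_iterate_tent_sub_le _ _ _
  rw [sawtooth, sawtooth, ← sum_sub_distrib]
  refine (abs_sum_le_sum_abs _ _).trans ((sum_le_sum hterm).trans ?_)
  rw [← sum_mul]
  refine mul_le_of_le_one_left (abs_nonneg _) ?_
  simpa [pow_succ, ← sum_mul] using
    mul_le_mul_of_nonneg_right (sum_geometric_two_le m) (by norm_num : (0 : ℝ) ≤ 1 / 2)

lemma abs_sqApprox_sub_le (m : ℕ) (a b : ℝ) :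
    |sqApprox m a - sqApprox m b| ≤ 2 * |a - b| :=
  calc |sqApprox m a - sqApprox m b| = |(a - b) - (sawtooth m a - sawtooth m b)| := by
        rw [sqApprox, sqApprox, sub_sub_sub_comm]
    _ ≤ |a - b| + |sawtooth m a - sawtooth m b| := abs_sub _ _
    _ ≤ 2 * |a - b| := by linarith [abs_sawtooth_sub_le m a b]

/-! ### Approximate multiplication -/

def clamp (c z : ℝ) : ℝ := ReLU (z + c) - ReLU (z - c) - c

lemma clamp_eq_max_min {c : ℝ} (hc : 0 ≤ c) (z : ℝ) : clamp c z = max (min z c) (-c) := by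
  unfold clamp ReLU
  rcases le_total z (-c) with h | h <;> rcases le_total z c with h' | h' <;>
    simp only [max_def, min_def] <;> split_ifs <;> linarith

lemma abs_clamp_le {c : ℝ} (hc : 0 ≤ c) (z : ℝ) : |clamp c z| ≤ c := by
  rw [clamp_eq_max_min hc, abs_le]
  exact ⟨le_max_right _ _, max_le (min_le_right _ _) (by linarith)⟩

lemma clamp_of_abs_le {c z : ℝ} (h : |z| ≤ c) : clamp c z = z := by
  rw [clamp_eq_max_min ((abs_nonneg z).trans h)]
  rw [abs_le] at h
  rw [min_eq_left h.2, max_eq_left h.1]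

lemma abs_clamp_sub_clamp_le {c : ℝ} (hc : 0 ≤ c) (z w : ℝ) :
    |clamp c z - clamp c w| ≤ |z - w| := by
  rw [clamp_eq_max_min hc, clamp_eq_max_min hc]
  refine (abs_max_sub_max_le_abs _ _ _).trans ((abs_min_sub_min_le_max _ _ _ _).trans ?_)
  simp

/-- Polarization: `a b = c² / 4 * ((|a + b| / c)² - (|a - b| / c)²)`. -/
def mulApprox (m : ℕ) (c a b : ℝ) : ℝ :=
  c ^ 2 / 4 * (sqApprox m (|a + b| / c) - sqApprox m (|a - b| / c))

lemma abs_mulApprox_sub_mul_le {c a b : ℝ} (m : ℕ) (hc : 0 < c) (h : |a| + |b| ≤ c) :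
    |mulApprox m c a b - a * b| ≤ c ^ 2 / (16 * 4 ^ m) := by
  have mem : ∀ u : ℝ, |u| ≤ c →
      sqApprox m (|u| / c) - (|u| / c) ^ 2 ∈ Set.Icc 0 (1 / (4 * 4 ^ m)) := fun u hu =>
    sqApprox_sub_sq_mem_Icc (by positivity) ((div_le_one hc).2 hu) m
  obtain ⟨h₁, h₁'⟩ := mem (a + b) ((abs_add_le a b).trans h)
  obtain ⟨h₂, h₂'⟩ := mem (a - b) ((abs_sub a b).trans h)
  have polar : c ^ 2 / 4 * ((|a + b| / c) ^ 2 - (|a - b| / c) ^ 2) = a * b := by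
    rw [div_pow, div_pow, sq_abs, sq_abs]
    field_simp
    ring
  have hdiff : mulApprox m c a b - a * b = c ^ 2 / 4 *
      ((sqApprox m (|a + b| / c) - (|a + b| / c) ^ 2) -
        (sqApprox m (|a - b| / c) - (|a - b| / c) ^ 2)) := by
    rw [← polar, mulApprox]
    ring
  rw [hdiff, abs_mul, abs_of_pos (by positivity), show c ^ 2 / (16 * 4 ^ m) =
    c ^ 2 / 4 * (1 / (4 * 4 ^ m)) by ring]
  gcongr
  rw [abs_le]
  constructor <;> linarith

lemma abs_sqApprox_abs_div_sub_le (m : ℕ) {c : ℝ} (hc : 0 < c) (u u' : ℝ) :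
    |sqApprox m (|u| / c) - sqApprox m (|u'| / c)| ≤ 2 * |u - u'| / c := by
  refine (abs_sqApprox_sub_le m _ _).trans ?_
  rw [← sub_div, abs_div, abs_of_pos hc, ← mul_div_assoc]
  gcongr 2 * ?_ / _
  exact abs_abs_sub_abs_le_abs_sub u u'

lemma abs_mulApprox_sub_le (m : ℕ) {c : ℝ} (hc : 0 < c) (a b a' b' : ℝ) :
    |mulApprox m c a b - mulApprox m c a' b'| ≤ c * (|a - a'| + |b - b'|) := by
  have h₁ := abs_sqApprox_abs_div_sub_le m hc (a + b) (a' + b')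
  have h₂ := abs_sqApprox_abs_div_sub_le m hc (a - b) (a' - b')
  have e₁ : |a + b - (a' + b')| ≤ |a - a'| + |b - b'| := by
    rw [add_sub_add_comm]; exact abs_add_le _ _
  have e₂ : |a - b - (a' - b')| ≤ |a - a'| + |b - b'| := by
    rw [sub_sub_sub_comm]; exact abs_sub _ _
  have hdiff : mulApprox m c a b - mulApprox m c a' b' = c ^ 2 / 4 *
      ((sqApprox m (|a + b| / c) - sqApprox m (|a' + b'| / c)) -
        (sqApprox m (|a - b| / c) - sqApprox m (|a' - b'| / c))) := by
    rw [mulApprox, mulApprox]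
    ring
  have hsum := (abs_sub _ _).trans (add_le_add h₁ h₂)
  rw [hdiff, abs_mul, abs_of_pos (by positivity)]
  calc c ^ 2 / 4 * |(sqApprox m (|a + b| / c) - sqApprox m (|a' + b'| / c)) -
        (sqApprox m (|a - b| / c) - sqApprox m (|a' - b'| / c))|
      ≤ c ^ 2 / 4 * (2 * (|a - a'| + |b - b'|) / c + 2 * (|a - a'| + |b - b'|) / c) := by
        gcongr
        refine hsum.trans (add_le_add ?_ ?_) <;> gcongr
    _ = c * (|a - a'| + |b - b'|) := by field_simp; ring

/-! ### Iterated multiplication -/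

/-- The clamp to the a-priori range `[-r^(s+2), r^(s+2)]` keeps the inputs of the next
`mulApprox` in the region where it is accurate. -/
def prodApprox (m : ℕ) (r : ℝ) (ξ : ℕ → ℝ) : ℕ → ℝ
  | 0 => ξ 0
  | s + 1 =>
    clamp (r ^ (s + 2)) (mulApprox m (r ^ (s + 1) + r) (prodApprox m r ξ s) (ξ (s + 1)))

section prodApprox

variable {m : ℕ} {r : ℝ} {ξ : ℕ → ℝ}

lemma abs_prodApprox_le (hr : 1 ≤ r) (hξ : ∀ j, |ξ j| ≤ r) :
    ∀ s, |prodApprox m r ξ s| ≤ r ^ (s + 1)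
  | 0 => by simpa [prodApprox] using hξ 0
  | _ + 1 => abs_clamp_le (by positivity) _

lemma abs_prod_range_le (hξ : ∀ j, |ξ j| ≤ r) (n : ℕ) : |∏ j ∈ range n, ξ j| ≤ r ^ n := by
  rw [abs_prod]
  simpa using prod_le_prod (fun j _ => abs_nonneg (ξ j)) (fun j _ => hξ j) (s := range n)

lemma mulApprox_error_add_le (hr : 1 ≤ r) (s m : ℕ) :
    (r ^ (s + 1) + r) ^ 2 / (16 * 4 ^ m) + r * (s * r ^ (3 * s) / (4 * 4 ^ m)) ≤
      (s + 1 : ℕ) * r ^ (3 * (s + 1)) / (4 * 4 ^ m) := by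
  have h₁ : (r ^ (s + 1) + r) ^ 2 / 4 ≤ r ^ (3 * (s + 1)) := by
    have : r ≤ r ^ (s + 1) := le_self_pow₀ hr (by omega)
    calc (r ^ (s + 1) + r) ^ 2 / 4 ≤ (r ^ (s + 1)) ^ 2 := by nlinarith
      _ ≤ r ^ (3 * (s + 1)) := by rw [← pow_mul]; exact pow_le_pow_right₀ hr (by omega)
  have h₂ : r * r ^ (3 * s) ≤ r ^ (3 * (s + 1)) := by
    rw [← pow_succ']; exact pow_le_pow_right₀ hr (by omega)
  rw [show (r ^ (s + 1) + r) ^ 2 / (16 * 4 ^ m) + r * (s * r ^ (3 * s) / (4 * 4 ^ m)) =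
    ((r ^ (s + 1) + r) ^ 2 / 4 + s * (r * r ^ (3 * s))) / (4 * 4 ^ m) by ring]
  gcongr
  push_cast
  nlinarith [mul_le_mul_of_nonneg_left h₂ s.cast_nonneg]

lemma abs_prodApprox_sub_prod_le (hr : 1 ≤ r) (hξ : ∀ j, |ξ j| ≤ r) :
    ∀ s, |prodApprox m r ξ s - ∏ j ∈ range (s + 1), ξ j| ≤ s * r ^ (3 * s) / (4 * 4 ^ m)
  | 0 => by simp [prodApprox]
  | s + 1 => by
    set p := prodApprox m r ξ s
    set P := ∏ j ∈ range (s + 1), ξ j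
    have hmul : |mulApprox m (r ^ (s + 1) + r) p (ξ (s + 1)) - p * ξ (s + 1)| ≤
        (r ^ (s + 1) + r) ^ 2 / (16 * 4 ^ m) :=
      abs_mulApprox_sub_mul_le m (by positivity)
        (add_le_add (abs_prodApprox_le hr hξ s) (hξ (s + 1)))
    have hprop : |p * ξ (s + 1) - P * ξ (s + 1)| ≤ r * (s * r ^ (3 * s) / (4 * 4 ^ m)) := by
      rw [← sub_mul, abs_mul, mul_comm]
      exact mul_le_mul (hξ _) (abs_prodApprox_sub_prod_le hr hξ s) (abs_nonneg _) (by linarith)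
    have hP : |P * ξ (s + 1)| ≤ r ^ (s + 2) := by
      rw [abs_mul, pow_succ]
      exact mul_le_mul (abs_prod_range_le hξ _) (hξ _) (abs_nonneg _) (by positivity)
    rw [prod_range_succ, ← clamp_of_abs_le hP]
    refine (abs_clamp_sub_clamp_le (by positivity) _ _).trans ?_
    refine (abs_sub_le _ (p * ξ (s + 1)) _).trans ?_
    exact (add_le_add hmul hprop).trans (mulApprox_error_add_le hr s m)

lemma abs_prodApprox_sub_le (hr : 1 ≤ r) (ξ ξ' : ℕ → ℝ) :
    ∀ s, |prodApprox m r ξ s - prodApprox m r ξ' s| ≤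
      (∏ i ∈ range s, (r ^ (i + 1) + r)) * ∑ j ∈ range (s + 1), |ξ j - ξ' j|
  | 0 => by simp [prodApprox]
  | s + 1 => by
    have hM : 1 ≤ ∏ i ∈ range s, (r ^ (i + 1) + r) :=
      one_le_prod fun i _ => by linarith [one_le_pow₀ (n := i + 1) hr]
    have ih := abs_prodApprox_sub_le hr ξ ξ' s
    have hstep := (abs_clamp_sub_clamp_le (by positivity : (0 : ℝ) ≤ r ^ (s + 2)) _ _).trans
      (abs_mulApprox_sub_le m (by positivity : 0 < r ^ (s + 1) + r) (prodApprox m r ξ s)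
        (ξ (s + 1)) (prodApprox m r ξ' s) (ξ' (s + 1)))
    rw [prodApprox, prodApprox, prod_range_succ, sum_range_succ _ (s + 1)]
    refine hstep.trans ?_
    rw [mul_comm (∏ i ∈ range s, _), mul_assoc]
    gcongr
    nlinarith [abs_nonneg (ξ (s + 1) - ξ' (s + 1))]

end prodApprox

/-! ### Layers of the product network -/

def lin (n : ℕ) (ρ v : ℕ → ℝ) : ℝ := ∑ j ∈ range n, ρ j * v j

section lin

variable {n : ℕ} {ρ σ v : ℕ → ℝ}

@[simp] lemma lin_zero : lin n 0 v = 0 := by simp [lin]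

@[simp] lemma lin_add : lin n (ρ + σ) v = lin n ρ v + lin n σ v := by
  simp [lin, add_mul, sum_add_distrib]

@[simp] lemma lin_sub : lin n (ρ - σ) v = lin n ρ v - lin n σ v := by
  simp [lin, sub_mul, sum_sub_distrib]

@[simp] lemma lin_neg : lin n (-ρ) v = -lin n ρ v := by
  simp [lin, sum_neg_distrib]

@[simp] lemma lin_smul (c : ℝ) : lin n (c • ρ) v = c * lin n ρ v := by
  simp [lin, mul_sum, mul_assoc]

@[simp] lemma lin_single {i : ℕ} (hi : i < n) (c : ℝ) : lin n (Pi.single i c) v = c * v i := by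
  simp [lin, Pi.single_apply, hi]

end lin

/-- A hidden layer of the product network holds ten registers and the values `ReLU (ξ j)`,
`ReLU (-ξ j)`, `j < d`, carrying the input along; registers `0, 1` are the first two neurons and
registers `2, …, 9` the last eight. -/
def reg (d : ℕ) (n : Fin 10) : ℕ := if (n : ℕ) < 2 then n else 2 * d + n

def state (d : ℕ) (ξ : ℕ → ℝ) (a : Fin 10 → ℝ) (i : ℕ) : ℝ :=
  if h : i < 2 then a ⟨i, by omega⟩
  else if i < 2 + d then ReLU (ξ (i - 2))
  else if i < 2 + 2 * d then ReLU (-ξ (i - 2 - d))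
  else if h' : i < 2 * d + 10 then a ⟨i - 2 * d, by omega⟩
  else 0

section state

variable {d : ℕ} {ξ : ℕ → ℝ} {a : Fin 10 → ℝ}

@[simp] lemma reg_lt (n : Fin 10) : reg d n < 2 * d + 10 := by
  unfold reg; split_ifs <;> omega

@[simp] lemma state_reg (n : Fin 10) : state d ξ a (reg d n) = a n := by
  unfold state reg
  split_ifs <;> first | omega | simp

@[simp] lemma lin_single_reg (n : Fin 10) (c : ℝ) :
    lin (2 * d + 10) (Pi.single (reg d n) c) (state d ξ a) = c * a n := by
  rw [lin_single (reg_lt n), state_reg]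

@[simp] lemma state_pos {j : ℕ} (hj : j < d) : state d ξ a (2 + j) = ReLU (ξ j) := by
  unfold state
  rw [dif_neg (by omega), if_pos (by omega), Nat.add_sub_cancel_left]

@[simp] lemma state_neg {j : ℕ} (hj : j < d) : state d ξ a (2 + d + j) = ReLU (-ξ j) := by
  unfold state
  rw [dif_neg (by omega), if_neg (by omega), if_pos (by omega)]
  congr 3
  omega

end state

/-- Copies the input part of the layer and computes register `n` from the row `w n`. -/
def layerV (d : ℕ) (w : Fin 10 → ℕ → ℝ) (i : ℕ) : ℕ → ℝ :=
  if h : i < 2 then w ⟨i, by omega⟩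
  else if i < 2 + 2 * d then Pi.single i 1
  else if h' : i < 2 * d + 10 then w ⟨i - 2 * d, by omega⟩
  else 0

def layerB (d : ℕ) (β : Fin 10 → ℝ) (i : ℕ) : ℝ :=
  if h : i < 2 then β ⟨i, by omega⟩
  else if i < 2 + 2 * d then 0
  else if h' : i < 2 * d + 10 then β ⟨i - 2 * d, by omega⟩
  else 0

def update (d : ℕ) (ξ : ℕ → ℝ) (w : Fin 10 → ℕ → ℝ) (β : Fin 10 → ℝ) (a : Fin 10 → ℝ) :
    Fin 10 → ℝ :=
  fun n => ReLU (lin (2 * d + 10) (w n) (state d ξ a) + β n)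

lemma relu_layer_apply (d : ℕ) (ξ : ℕ → ℝ) (w : Fin 10 → ℕ → ℝ) (β : Fin 10 → ℝ)
    (a : Fin 10 → ℝ) (i : ℕ) :
    ReLU (lin (2 * d + 10) (layerV d w i) (state d ξ a) + layerB d β i) =
      state d ξ (update d ξ w β a) i := by
  unfold layerV layerB
  by_cases h₀ : i < 2
  · simp [h₀, state, update]
  by_cases h₁ : i < 2 + 2 * d
  · rw [dif_neg h₀, if_pos h₁, dif_neg h₀, if_pos h₁, lin_single (by omega), one_mul, add_zero]
    unfold state
    simp only [dif_neg h₀]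
    split_ifs <;> simp
  by_cases h₂ : i < 2 * d + 10
  · simp only [dif_neg h₀, if_neg h₁, dif_pos h₂, state, update]
    rw [if_neg (by omega)]
  · simp [h₀, h₁, h₂, state]
    omega

lemma hidden_succ_of_layer {φ : NN} {k d : ℕ} {w : Fin 10 → ℕ → ℝ} {β : Fin 10 → ℝ}
    (hl : φ.l k = 2 * d + 10) (hV : φ.V k = layerV d w) (hb : φ.b k = layerB d β)
    {ξ x : ℕ → ℝ} {a : Fin 10 → ℝ} (h : φ.hidden ReLU k x = state d ξ a) :
    φ.hidden ReLU (k + 1) x = state d ξ (update d ξ w β a) := by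
  funext i
  show ReLU (φ.aff k (φ.hidden ReLU k x) i) = _
  rw [h, NN.aff, hl, hV, hb]
  exact relu_layer_apply d ξ w β a i

def prodRegs (p : ℝ) : Fin 10 → ℝ := ![ReLU p, ReLU (-p), 0, 0, 0, 0, 0, 0, 0, 0]

def splitRegs (z z' : ℝ) : Fin 10 → ℝ :=
  ![0, 0, ReLU z, ReLU (-z), 0, 0, ReLU z', ReLU (-z'), 0, 0]

def tentRegs (k : ℕ) (t t' : ℝ) : Fin 10 → ℝ :=
  ![0, 0, ReLU (tent^[k] t), ReLU (tent^[k] t - 1 / 2), ReLU (tent^[k] t - 1), sqApprox k t,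
    ReLU (tent^[k] t'), ReLU (tent^[k] t' - 1 / 2), ReLU (tent^[k] t' - 1), sqApprox k t']

def clampRegs (R z : ℝ) : Fin 10 → ℝ := ![ReLU (z + R), ReLU (z - R), 0, 0, 0, 0, 0, 0, 0, 0]

def splitW (d j : ℕ) (C : ℝ) : Fin 10 → ℕ → ℝ :=
  let p := Pi.single (reg d 0) 1 - Pi.single (reg d 1) 1
  let x := Pi.single (2 + j) 1 - Pi.single (2 + d + j) 1
  ![0, 0, C⁻¹ • (p + x), -C⁻¹ • (p + x), 0, 0, C⁻¹ • (p - x), -C⁻¹ • (p - x), 0, 0]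

def absW (d : ℕ) : Fin 10 → ℕ → ℝ :=
  let t := Pi.single (reg d 2) 1 + Pi.single (reg d 3) 1
  let t' := Pi.single (reg d 6) 1 + Pi.single (reg d 7) 1
  ![0, 0, t, t, t, t, t', t', t', t']

def tentRow (d : ℕ) (i₀ i₁ i₂ : Fin 10) : ℕ → ℝ :=
  Pi.single (reg d i₀) 2 - Pi.single (reg d i₁) 4 + Pi.single (reg d i₂) 2

def tentW (d : ℕ) (c : ℝ) : Fin 10 → ℕ → ℝ :=
  let g := tentRow d 2 3 4
  let g' := tentRow d 6 7 8
  ![0, 0, g, g, g, Pi.single (reg d 5) 1 - c • g, g', g', g', Pi.single (reg d 9) 1 - c • g']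

def tentB : Fin 10 → ℝ := ![0, 0, 0, -(1 / 2), -1, 0, 0, -(1 / 2), -1, 0]

def mulW (d : ℕ) (c : ℝ) : Fin 10 → ℕ → ℝ :=
  let y := c • (Pi.single (reg d 5) 1 - Pi.single (reg d 9) 1)
  ![y, y, 0, 0, 0, 0, 0, 0, 0, 0]

def clampW (d : ℕ) : Fin 10 → ℕ → ℝ :=
  let y := Pi.single (reg d 0) 1 - Pi.single (reg d 1) 1
  ![y, -y, 0, 0, 0, 0, 0, 0, 0, 0]

section layers

variable {d : ℕ} {ξ : ℕ → ℝ}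

lemma update_split {j : ℕ} (hj : j < d) (C p : ℝ) :
    update d ξ (splitW d j C) 0 (prodRegs p) = splitRegs ((p + ξ j) / C) ((p - ξ j) / C) := by
  funext n
  fin_cases n <;> simp (disch := omega) [update, splitW, prodRegs, splitRegs] <;> ring_nf

lemma update_abs (z z' : ℝ) :
    update d ξ (absW d) tentB (splitRegs z z') = tentRegs 0 |z| |z'| := by
  funext n
  fin_cases n <;> simp [update, absW, tentB, splitRegs, tentRegs] <;> ring_nf

lemma update_tent {t t' : ℝ} (ht : 0 ≤ t) (ht' : 0 ≤ t') (k : ℕ) :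
    update d ξ (tentW d (4 ^ (k + 1))⁻¹) tentB (tentRegs k t t') = tentRegs (k + 1) t t' := by
  funext n
  simp only [tentRegs]
  rw [← relu_of_nonneg (sqApprox_nonneg ht (k + 1)),
    ← relu_of_nonneg (sqApprox_nonneg ht' (k + 1))]
  fin_cases n <;> simp [update, tentW, tentRow, tentB, Function.iterate_succ_apply',
    sqApprox_succ, tent] <;> ring_nf

lemma update_mul (k : ℕ) (c R t t' : ℝ) :
    update d ξ (mulW d c) ![R, -R, 0, 0, 0, 0, 0, 0, 0, 0] (tentRegs k t t') =
      clampRegs R (c * (sqApprox k t - sqApprox k t')) := by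
  funext n
  fin_cases n <;> simp [update, mulW, tentRegs, clampRegs]
  ring_nf

lemma update_clamp (R z : ℝ) :
    update d ξ (clampW d) ![-R, R, 0, 0, 0, 0, 0, 0, 0, 0] (clampRegs R z) =
      prodRegs (clamp R z) := by
  funext n
  fin_cases n <;> simp [update, clampW, clampRegs, prodRegs, clamp] <;> ring_nf

end layers

def inputV (d i : ℕ) : ℕ → ℝ :=
  if i = 0 then Pi.single 0 1
  else if i = 1 then Pi.single 0 (-1)
  else if i < 2 + d then Pi.single (i - 2) 1
  else if i < 2 + 2 * d then Pi.single (i - 2 - d) (-1)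
  else 0

def outputV (d : ℕ) (_ : ℕ) : ℕ → ℝ := Pi.single (reg d 0) 1 - Pi.single (reg d 1) 1

lemma prodRegs_of_two_le (p : ℝ) {n : Fin 10} (hn : 2 ≤ (n : ℕ)) : prodRegs p n = 0 := by
  fin_cases n <;> simp_all [prodRegs]

lemma relu_input_apply {d : ℕ} (hd : 0 < d) (ξ : ℕ → ℝ) (i : ℕ) :
    ReLU (lin d (inputV d i) ξ) = state d ξ (prodRegs (ξ 0)) i := by
  unfold inputV state
  split_ifs <;> first | omega | (subst_vars; simp (disch := omega) [prodRegs, *])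
  exact (prodRegs_of_two_le _ (by simp; omega)).symm

def stageW (d m : ℕ) (r : ℝ) (s o : ℕ) : Fin 10 → ℕ → ℝ :=
  if o = 0 then splitW d (s + 1) (r ^ (s + 1) + r)
  else if o = 1 then absW d
  else if o ≤ m + 1 then tentW d (4 ^ (o - 1))⁻¹
  else if o = m + 2 then mulW d ((r ^ (s + 1) + r) ^ 2 / 4)
  else clampW d

def stageB (m : ℕ) (r : ℝ) (s o : ℕ) : Fin 10 → ℝ :=
  if o = 0 then 0
  else if o ≤ m + 1 then tentB
  else if o = m + 2 then ![r ^ (s + 2), -r ^ (s + 2), 0, 0, 0, 0, 0, 0, 0, 0]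
  else ![-r ^ (s + 2), r ^ (s + 2), 0, 0, 0, 0, 0, 0, 0, 0]

/-- The ReLU network computing `prodApprox m r ξ (d - 1)`. Layer `1 + s * (m + 4) + o` performs
step `o` of the `(s + 1)`-st multiplication: splitting `p ± ξ (s + 1)` (`o = 0`), taking absolute
values (`o = 1`), `m` tent iterations, the polarization product (`o = m + 2`) and the
clamp (`o = m + 3`). -/
def prodNet (d m : ℕ) (r : ℝ) : NN where
  Dm := 1 + (d - 1) * (m + 4)
  l k := if k = 0 then d else if k ≤ 1 + (d - 1) * (m + 4) then 2 * d + 10 else 1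
  V k :=
    if k = 0 then inputV d
    else if k ≤ (d - 1) * (m + 4) then
      layerV d (stageW d m r ((k - 1) / (m + 4)) ((k - 1) % (m + 4)))
    else outputV d
  b k :=
    if k = 0 then 0
    else if k ≤ (d - 1) * (m + 4) then
      layerB d (stageB m r ((k - 1) / (m + 4)) ((k - 1) % (m + 4)))
    else 0

section prodNet

variable {d m : ℕ} {r : ℝ}

lemma prodNet_hidden_one (hd : 0 < d) (x : ℕ → ℝ) :
    (prodNet d m r).hidden ReLU 1 x = state d x (prodRegs (x 0)) := by
  funext i
  show ReLU ((prodNet d m r).aff 0 x i) = _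
  simpa [NN.aff, prodNet, lin] using relu_input_apply hd x i

lemma prodNet_hidden_succ {s o k : ℕ} (hs : s + 2 ≤ d) (ho : o < m + 4)
    (hk : k = 1 + s * (m + 4) + o) {x ξ : ℕ → ℝ} {a : Fin 10 → ℝ}
    (h : (prodNet d m r).hidden ReLU k x = state d ξ a) :
    (prodNet d m r).hidden ReLU (k + 1) x =
      state d ξ (update d ξ (stageW d m r s o) (stageB m r s o) a) := by
  have hk₁ : k - 1 = o + s * (m + 4) := by omega
  have hdiv : (k - 1) / (m + 4) = s := by
    rw [hk₁, Nat.add_mul_div_right _ _ (by omega), Nat.div_eq_of_lt ho, zero_add]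
  have hmod : (k - 1) % (m + 4) = o := by
    rw [hk₁, Nat.add_mul_mod_self_right, Nat.mod_eq_of_lt ho]
  have hle : k ≤ (d - 1) * (m + 4) := by
    have := Nat.mul_le_mul_right (m + 4) (show s + 1 ≤ d - 1 by omega)
    rw [add_mul, one_mul] at this
    omega
  refine hidden_succ_of_layer ?_ ?_ ?_ h <;>
    simp only [prodNet, hdiv, hmod, if_neg (show k ≠ 0 by omega), if_pos hle,
      if_pos (show k ≤ 1 + (d - 1) * (m + 4) by omega)]

lemma prodNet_hidden_stage (hr : 0 ≤ r) {s : ℕ} (hs : s + 2 ≤ d) {x ξ : ℕ → ℝ}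
    (h : (prodNet d m r).hidden ReLU (1 + s * (m + 4)) x =
      state d ξ (prodRegs (prodApprox m r ξ s))) :
    (prodNet d m r).hidden ReLU (1 + (s + 1) * (m + 4)) x =
      state d ξ (prodRegs (prodApprox m r ξ (s + 1))) := by
  set C := r ^ (s + 1) + r
  set p := prodApprox m r ξ s
  have hsplit := prodNet_hidden_succ hs (o := 0) (by omega) (by ring) h
  simp only [stageW, stageB, if_true, update_split (show s + 1 < d by omega)] at hsplit
  have habs := prodNet_hidden_succ hs (o := 1) (by omega) rfl hsplit
  simp only [stageW, one_ne_zero, ↓reduceIte, stageB, le_add_iff_nonneg_left, zero_le,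
    update_abs] at habs
  have htent : ∀ k ≤ m, (prodNet d m r).hidden ReLU (1 + s * (m + 4) + 1 + 1 + k) x =
      state d ξ (tentRegs k |(p + ξ (s + 1)) / C| |(p - ξ (s + 1)) / C|) := by
    intro k hk
    induction k with
    | zero => exact habs
    | succ k ih =>
      have := prodNet_hidden_succ hs (o := k + 2) (by omega) (by ring) (ih (by omega))
      rw [← add_assoc]
      simpa only [stageW, Nat.add_eq_zero_iff, OfNat.ofNat_ne_zero, and_false, ↓reduceIte,
        Nat.reduceEqDiff, show k + 2 ≤ m + 1 by omega, Nat.add_one_sub_one, stageB,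
        update_tent (abs_nonneg _) (abs_nonneg _)] using this
  have hmul := prodNet_hidden_succ hs (o := m + 2) (by omega) (by ring) (htent m le_rfl)
  simp only [stageW, Nat.add_eq_zero_iff, OfNat.ofNat_ne_zero, and_false, ↓reduceIte,
    Nat.reduceEqDiff, add_le_add_iff_left, Nat.not_ofNat_le_one, stageB,
    update_mul] at hmul
  have hclamp := prodNet_hidden_succ hs (o := m + 3) (by omega) (by ring) hmul
  simp only [stageW, Nat.add_eq_zero_iff, OfNat.ofNat_ne_zero, and_false, ↓reduceIte,
    Nat.reduceEqDiff, add_le_add_iff_left, Nat.not_ofNat_le_one,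
    Nat.succ_ne_self, stageB, update_clamp] at hclamp
  rw [show 1 + (s + 1) * (m + 4) = 1 + s * (m + 4) + 1 + 1 + m + 1 + 1 by ring, hclamp,
    prodApprox, mulApprox, abs_div, abs_div, abs_of_nonneg (by positivity : 0 ≤ C)]

lemma prodNet_hidden (hr : 0 ≤ r) (ξ : ℕ → ℝ) :
    ∀ s, s < d → (prodNet d m r).hidden ReLU (1 + s * (m + 4)) ξ =
      state d ξ (prodRegs (prodApprox m r ξ s))
  | 0, hd => by simpa [prodApprox] using prodNet_hidden_one hd ξ
  | s + 1, hs => prodNet_hidden_stage hr (by omega) (prodNet_hidden hr ξ s (by omega))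

lemma prodNet_fullReal (hd : 0 < d) (hr : 0 ≤ r) (x : ℕ → ℝ) :
    (prodNet d m r).fullReal ReLU x 0 = prodApprox m r (trunc d x) (d - 1) := by
  have hdepth : (prodNet d m r).Dm = 1 + (d - 1) * (m + 4) := rfl
  have h := prodNet_hidden (d := d) (m := m) hr (trunc d x) (d - 1) (by omega)
  have hl : (prodNet d m r).l (1 + (d - 1) * (m + 4)) = 2 * d + 10 := by simp [prodNet]
  have hV : (prodNet d m r).V (1 + (d - 1) * (m + 4)) = outputV d := by simp [prodNet]
  have hb : (prodNet d m r).b (1 + (d - 1) * (m + 4)) = 0 := by simp [prodNet]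
  rw [NN.fullReal, hdepth, show (prodNet d m r).l 0 = d from rfl, h, NN.aff, hl, hV, hb]
  show lin _ (outputV d 0) _ + 0 = _
  simp [outputV, prodRegs]

lemma prodNet_l_depth : (prodNet d m r).l (prodNet d m r).depth = 1 := by
  simp [prodNet, NN.depth]

lemma prodNet_P_le :
    (prodNet d m r).P ≤ (2 + (d - 1) * (m + 4)) * ((2 * d + 10) * (2 * d + 11)) := by
  have hl : ∀ k, (prodNet d m r).l k ≤ 2 * d + 10 := fun k => by
    simp only [prodNet]
    split_ifs <;> omega
  calc (prodNet d m r).P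
      ≤ ∑ _k ∈ range (prodNet d m r).depth, (2 * d + 10) * (2 * d + 11) :=
        sum_le_sum fun k _ => Nat.mul_le_mul (hl _) (Nat.succ_le_succ (hl _))
    _ = _ := by simp [NN.depth, prodNet]; ring

end prodNet

/-! ### Approximation, Lipschitz and size bounds -/

section emb

variable {d : ℕ}

lemma trunc_emb (x : EuclideanSpace ℝ (Fin d)) : trunc d (emb d x) = emb d x := by
  funext j
  by_cases h : j < d <;> simp [trunc, emb, h]

lemma prod_range_emb (x : EuclideanSpace ℝ (Fin d)) : ∏ j ∈ range d, emb d x j = ∏ i, x i := by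
  rw [← Fin.prod_univ_eq_prod_range]
  simp [emb]

lemma abs_emb_le {r : ℝ} (hr : 0 ≤ r) {x : EuclideanSpace ℝ (Fin d)} (hx : ∀ i, |x i| ≤ r)
    (j : ℕ) : |emb d x j| ≤ r := by
  unfold emb
  split_ifs
  · exact hx _
  · simpa using hr

lemma sum_range_abs_emb_sub_le (x y : EuclideanSpace ℝ (Fin d)) :
    ∑ j ∈ range d, |emb d x j - emb d y j| ≤ √d * ‖x - y‖ := by
  rw [← Fin.sum_univ_eq_sum_range (fun j => |emb d x j - emb d y j|)]
  simpa [emb, EuclideanSpace.norm_eq, sq_abs] using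
    Real.sum_mul_le_sqrt_mul_sqrt univ (fun _ => (1 : ℝ)) (fun i => |x i - y i|)

end emb

lemma prod_range_pow_add_le {r : ℝ} (hr : 1 ≤ r) (n : ℕ) :
    ∏ i ∈ range n, (r ^ (i + 1) + r) ≤ 2 ^ n * r ^ (n * n) := by
  calc ∏ i ∈ range n, (r ^ (i + 1) + r) ≤ ∏ _i ∈ range n, 2 * r ^ n := by
        refine prod_le_prod (fun _ _ => by positivity) fun i hi => ?_
        have h₁ : r ≤ r ^ (i + 1) := le_self_pow₀ hr (by omega)
        have h₂ : r ^ (i + 1) ≤ r ^ n := pow_le_pow_right₀ hr (by simpa using hi)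
        linarith
    _ = 2 ^ n * r ^ (n * n) := by rw [prod_const, card_range, mul_pow, pow_mul]

lemma sqrt_mul_two_pow_le {d : ℕ} (hd : 0 < d) :
    √d * 2 ^ (d - 1) ≤ (8 : ℝ) ^ (((d : ℝ) - 1) / 2) := by
  have hd' : (d : ℝ) ≤ 2 ^ (d - 1) := by
    exact_mod_cast (show d ≤ 2 ^ (d - 1) by have := Nat.lt_two_pow_self (n := d - 1); omega)
  have h8 : (8 : ℝ) ^ (((d : ℝ) - 1) / 2) = √(2 ^ (d - 1) * 4 ^ (d - 1)) := by
    rw [Real.sqrt_eq_rpow, ← mul_pow, ← Real.rpow_natCast, ← Real.rpow_mul (by norm_num)]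
    push_cast [Nat.cast_sub hd]
    norm_num
    ring_nf
  rw [h8, Real.le_sqrt (by positivity) (by positivity), mul_pow, Real.sq_sqrt d.cast_nonneg,
    ← pow_mul, show (2 : ℝ) ^ ((d - 1) * 2) = 4 ^ (d - 1) by rw [mul_comm, pow_mul]; norm_num]
  gcongr

section prodNet

variable {d m : ℕ} {r : ℝ}

lemma prodNet_realScalar (hd : 0 < d) (hr : 0 ≤ r) (x : EuclideanSpace ℝ (Fin d)) :
    (prodNet d m r).realScalar ReLU d x = prodApprox m r (emb d x) (d - 1) := by
  rw [NN.realScalar, prodNet_fullReal hd hr, trunc_emb]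

lemma abs_prod_sub_prodNet_le {ε : ℝ} (hd : 0 < d) (hr : 1 ≤ r) (hε : 0 < ε)
    (hm : d * r ^ (3 * d) / ε ≤ 4 ^ m) {x : EuclideanSpace ℝ (Fin d)} (hx : ∀ i, |x i| ≤ r) :
    |∏ i, x i - (prodNet d m r).realScalar ReLU d x| ≤ ε := by
  have h := abs_prodApprox_sub_prod_le (m := m) hr (abs_emb_le (by linarith) hx) (d - 1)
  rw [Nat.sub_add_cancel hd, prod_range_emb] at h
  rw [prodNet_realScalar hd (by linarith), abs_sub_comm]
  refine h.trans ?_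
  rw [div_le_iff₀ hε] at hm
  calc ((d - 1 : ℕ) : ℝ) * r ^ (3 * (d - 1)) / (4 * 4 ^ m) ≤ d * r ^ (3 * d) / (4 * 4 ^ m) := by
        gcongr
        · exact_mod_cast Nat.sub_le d 1
        · omega
    _ ≤ 4 ^ m * ε / (4 * 4 ^ m) := by gcongr
    _ = ε / 4 := by field_simp
    _ ≤ ε := by linarith

lemma abs_prodNet_sub_le (hd : 0 < d) (hr : 1 ≤ r) (x y : EuclideanSpace ℝ (Fin d)) :
    |(prodNet d m r).realScalar ReLU d x - (prodNet d m r).realScalar ReLU d y| ≤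
      (8 : ℝ) ^ (((d : ℝ) - 1) / 2) * r ^ (d * (d - 1)) * ‖x - y‖ := by
  rw [prodNet_realScalar hd (by linarith), prodNet_realScalar hd (by linarith)]
  have h := abs_prodApprox_sub_le (m := m) hr (emb d x) (emb d y) (d - 1)
  rw [Nat.sub_add_cancel hd] at h
  have hprod : ∏ i ∈ range (d - 1), (r ^ (i + 1) + r) ≤ 2 ^ (d - 1) * r ^ (d * (d - 1)) :=
    (prod_range_pow_add_le hr (d - 1)).trans (by gcongr; exact Nat.sub_le d 1)
  refine h.trans ?_
  calc _ ≤ (2 ^ (d - 1) * r ^ (d * (d - 1))) * (√d * ‖x - y‖) :=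
        mul_le_mul hprod (sum_range_abs_emb_sub_le x y) (sum_nonneg fun _ _ => abs_nonneg _)
          (by positivity)
    _ = (√d * 2 ^ (d - 1)) * r ^ (d * (d - 1)) * ‖x - y‖ := by ring
    _ ≤ _ := by gcongr; exact sqrt_mul_two_pow_le hd

lemma cast_prodNet_P_le (hd : 2 ≤ d) : ((prodNet d m r).P : ℝ) ≤ 56 * d ^ 3 * (m + 4) := by
  have hcast : (((2 + (d - 1) * (m + 4)) * ((2 * d + 10) * (2 * d + 11)) : ℕ) : ℝ) =
      (2 + ((d : ℝ) - 1) * (m + 4)) * ((2 * d + 10) * (2 * d + 11)) := by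
    push_cast [Nat.cast_sub (by omega : 1 ≤ d)]
    ring
  have hd' : (2 : ℝ) ≤ d := by exact_mod_cast hd
  refine (Nat.cast_le.mpr prodNet_P_le).trans (hcast.le.trans ?_)
  have e₁ : 2 + ((d : ℝ) - 1) * (m + 4) ≤ d * (m + 4) := by nlinarith [m.cast_nonneg (α := ℝ)]
  have e₂ : (2 * (d : ℝ) + 10) * (2 * d + 11) ≤ 56 * d ^ 2 := by nlinarith
  calc (2 + ((d : ℝ) - 1) * (m + 4)) * ((2 * d + 10) * (2 * d + 11))
      ≤ (d * (m + 4)) * (56 * d ^ 2) := mul_le_mul e₁ e₂ (by positivity) (by positivity)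
    _ = 56 * d ^ 3 * (m + 4) := by ring

end prodNet

open Real

def tentSteps (d : ℕ) (r ε : ℝ) : ℕ := ⌈logb 2 (d * r ^ (3 * d) / ε)⌉₊

section tentSteps

variable {d : ℕ} {r ε : ℝ}

lemma le_four_pow_tentSteps (hd : 0 < d) (hr : 0 < r) (hε : 0 < ε) :
    d * r ^ (3 * d) / ε ≤ 4 ^ tentSteps d r ε := by
  calc (d : ℝ) * r ^ (3 * d) / ε = 2 ^ logb 2 (d * r ^ (3 * d) / ε) :=
        (rpow_logb (by norm_num) (by norm_num) (by positivity)).symm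
    _ ≤ 2 ^ (tentSteps d r ε : ℝ) := rpow_le_rpow_of_exponent_le (by norm_num) (Nat.le_ceil _)
    _ = 2 ^ tentSteps d r ε := rpow_natCast 2 _
    _ ≤ 4 ^ tentSteps d r ε := pow_le_pow_left₀ (by norm_num) (by norm_num) _

lemma tentSteps_le (hd : 0 < d) (hr : 1 ≤ r) (hε : 0 < ε) (hε₁ : ε ≤ 1) :
    (tentSteps d r ε : ℝ) ≤ logb 2 d + 3 * d * logb 2 r + logb 2 ε⁻¹ + 1 := by
  have hA : 1 ≤ (d : ℝ) * r ^ (3 * d) / ε := by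
    rw [le_div_iff₀ hε, one_mul]
    calc ε ≤ 1 * 1 := by linarith
      _ ≤ d * r ^ (3 * d) := by gcongr; exacts [by exact_mod_cast hd, one_le_pow₀ hr]
  have hlog : logb 2 (d * r ^ (3 * d) / ε) = logb 2 d + 3 * d * logb 2 r + logb 2 ε⁻¹ := by
    rw [logb_div (by positivity) hε.ne', logb_mul (by positivity) (by positivity), logb_pow,
      logb_inv]
    push_cast
    ring
  have h := Nat.ceil_lt_add_one (logb_nonneg (b := 2) (by norm_num) hA)
  rw [hlog] at h
  rw [tentSteps, hlog]
  exact h.le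

end tentSteps

lemma one_le_logb_two_of_two_le {x : ℝ} (hx : 2 ≤ x) : 1 ≤ logb 2 x := by
  rw [le_logb_iff_rpow_le (by norm_num) (by linarith)]
  simpa using hx

lemma two_le_inv_of_le_half {ε : ℝ} (hε : 0 < ε) (hε₁ : ε ≤ 1 / 2) : 2 ≤ ε⁻¹ := by
  rw [le_inv_comm₀ (by norm_num) hε]; linarith

lemma prodNet_P_le_of_r_eq_one {d : ℕ} {ε : ℝ} (hd : 2 ≤ d) (hε : 0 < ε) (hε₁ : ε ≤ 1 / 2) :
    ((prodNet d (tentSteps d 1 ε) 1).P : ℝ) ≤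
      (1 / 3) * 10 ^ 5 * logb 2 d * d ^ 6 * logb 2 ε⁻¹ := by
  have hd' : (2 : ℝ) ≤ d := by exact_mod_cast hd
  have ha := one_le_logb_two_of_two_le hd'
  have hb := one_le_logb_two_of_two_le (two_le_inv_of_le_half hε hε₁)
  have hm := tentSteps_le (d := d) (by omega) le_rfl hε (by linarith)
  rw [logb_one, mul_zero, add_zero] at hm
  have hd36 : (d : ℝ) ^ 3 ≤ d ^ 6 := pow_le_pow_right₀ (by linarith) (by norm_num)
  have hab : 1 ≤ logb 2 d * logb 2 ε⁻¹ := by nlinarith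
  calc ((prodNet d (tentSteps d 1 ε) 1).P : ℝ) ≤ 56 * d ^ 3 * (tentSteps d 1 ε + 4) :=
        cast_prodNet_P_le hd
    _ ≤ 56 * d ^ 3 * (7 * (logb 2 d * logb 2 ε⁻¹)) := by gcongr; nlinarith
    _ ≤ _ := by
      nlinarith [mul_le_mul_of_nonneg_right hd36 (by linarith : 0 ≤ logb 2 d * logb 2 ε⁻¹)]

lemma prodNet_P_le_of_two_le {d : ℕ} {r ε : ℝ} (hd : 2 ≤ d) (hr : 2 ≤ r) (hε : 0 < ε)
    (hε₁ : ε ≤ 1 / 2) :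
    ((prodNet d (tentSteps d r ε) r).P : ℝ) ≤
      (2 / 5) * 10 ^ 5 * logb 2 r * logb 2 d * d ^ 8 * logb 2 ε⁻¹ := by
  have hd' : (2 : ℝ) ≤ d := by exact_mod_cast hd
  have ha := one_le_logb_two_of_two_le hd'
  have hb := one_le_logb_two_of_two_le (two_le_inv_of_le_half hε hε₁)
  have hc := one_le_logb_two_of_two_le hr
  have hm := tentSteps_le (d := d) (r := r) (by omega) (by linarith) hε (by linarith)
  have hab : 1 ≤ logb 2 d * logb 2 ε⁻¹ := by nlinarith
  have hacb : 1 ≤ logb 2 d * logb 2 r * logb 2 ε⁻¹ := by nlinarith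
  have hd48 : (d : ℝ) ^ 4 ≤ d ^ 8 := pow_le_pow_right₀ (by linarith) (by norm_num)
  have hm' : (tentSteps d r ε : ℝ) + 4 ≤ 8 * d * (logb 2 d * logb 2 r * logb 2 ε⁻¹) := by
    have h₁ : logb 2 d ≤ logb 2 d * logb 2 r * logb 2 ε⁻¹ := by nlinarith
    have h₂ : logb 2 ε⁻¹ ≤ logb 2 d * logb 2 r * logb 2 ε⁻¹ := by nlinarith
    have h₃ : d * logb 2 r ≤ d * (logb 2 d * logb 2 r * logb 2 ε⁻¹) := by
      gcongr
      nlinarith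
    nlinarith
  calc ((prodNet d (tentSteps d r ε) r).P : ℝ) ≤ 56 * d ^ 3 * (tentSteps d r ε + 4) :=
        cast_prodNet_P_le hd
    _ ≤ 56 * d ^ 3 * (8 * d * (logb 2 d * logb 2 r * logb 2 ε⁻¹)) := by gcongr
    _ ≤ _ := by
      nlinarith [mul_le_mul_of_nonneg_right hd48
        (by linarith : 0 ≤ logb 2 d * logb 2 r * logb 2 ε⁻¹)]

end ProductApprox

open ProductApprox

/-- Proposition 7.6: the product `x_1 ⋯ x_d` can be approximated by ReLU
networks on `[-r, r]^d` without the curse of dimensionality. -/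
theorem product_approximation (r : ℝ) (hr : 1 ≤ r) :
    ∀ d : ℕ, 2 ≤ d → ∀ ε : ℝ, 0 < ε → ε ≤ min (1 / 2) r⁻¹ →
      ∃ φ : NN, φ.l 0 = d ∧ φ.l φ.depth = 1 ∧
        (∀ x : EuclideanSpace ℝ (Fin d), (∀ i, |x i| ≤ r) →
          |(∏ i : Fin d, x i) - φ.realScalar ReLU d x| ≤ ε) ∧
        (∀ x y : EuclideanSpace ℝ (Fin d),
          |φ.realScalar ReLU d x - φ.realScalar ReLU d y| ≤
            (8 : ℝ) ^ (((d : ℝ) - 1) / 2) * r ^ (d * (d - 1)) * ‖x - y‖) ∧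
        (r = 1 →
          (φ.P : ℝ) ≤ (1 / 3) * 10 ^ 5 * Real.logb 2 d * (d : ℝ) ^ 6 * Real.logb 2 ε⁻¹) ∧
        (2 ≤ r →
          (φ.P : ℝ) ≤ (2 / 5) * 10 ^ 5 * Real.logb 2 r * Real.logb 2 d * (d : ℝ) ^ 8 *
            Real.logb 2 ε⁻¹) := by
  intro d hd ε hε hεr
  have hε₁ : ε ≤ 1 / 2 := hεr.trans (min_le_left _ _)
  refine ⟨prodNet d (tentSteps d r ε) r, rfl, prodNet_l_depth,
    fun x hx => abs_prod_sub_prodNet_le (by omega) hr hε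
      (le_four_pow_tentSteps (by omega) (by linarith) hε) hx,
    abs_prodNet_sub_le (by omega) hr, fun hr₁ => ?_,
    fun hr₂ => prodNet_P_le_of_two_le hd hr₂ hε hε₁⟩
  subst hr₁
  exact prodNet_P_le_of_r_eq_one hd hε hε₁

end
end
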